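/- arXiv:2010.08233 — 3 statements merged into one kernel-verified Lean document; each statement's English description precedes it below -/
import Mathlib

section
/- Let 𝔸 be a symmetric strict monoidal category and let D be a cornering of 𝔸. Then in the strict monoidal category H D of horizontal cells of D, the object I^∘ is isomorphic to the monoidal unit I, and the object I^• is isomorphic to the monoidal unit I. (The isomorphism I ≅ I^∘ is given by the two ∘-corner cells for the unit object I of 𝔸, whose two composites are identities by the yanking equations; similarly for I^•.) -/
/-- A single-object double category: a horizontal edge monoid `H`, a vertical
edge monoid `V`, and cells indexed by top/bottom boundaries in `H` and
left/right boundaries in `V`, with associative and unital horizontal and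
vertical composition satisfying the interchange law, and with the horizontal
and vertical identity cells on the respective units coinciding. -/
structure SODC where
  H : Type
  V : Type
  hMul : H → H → H
  hOne : H
  vMul : V → V → V
  vOne : V
  hMul_assoc : ∀ a b c : H, hMul (hMul a b) c = hMul a (hMul b c)
  hOne_mul : ∀ a : H, hMul hOne a = a
  hMul_one : ∀ a : H, hMul a hOne = a
  vMul_assoc : ∀ x y z : V, vMul (vMul x y) z = vMul x (vMul y z)
  vOne_mul : ∀ x : V, vMul vOne x = x
  vMul_one : ∀ x : V, vMul x vOne = x
  /-- Cells, indexed by top, bottom (in `H`) and left, right (in `V`) boundaries. -/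
  Cell : H → H → V → V → Type
  /-- The horizontal identity cell on `x` (top and bottom boundary the unit). -/
  hid : ∀ x : V, Cell hOne hOne x x
  /-- The vertical identity cell on `a` (left and right boundary the unit). -/
  vid : ∀ a : H, Cell a a vOne vOne
  /-- Horizontal composition of cells. -/
  hcomp : ∀ {t b t' b' : H} {x y z : V},
    Cell t b x y → Cell t' b' y z → Cell (hMul t t') (hMul b b') x z
  /-- Vertical composition of cells. -/
  vcomp : ∀ {t m b : H} {x y x' y' : V},
    Cell t m x y → Cell m b x' y' → Cell t b (vMul x x') (vMul y y')
  hcomp_assoc : ∀ {t b t' b' t'' b'' : H} {x y z w : V}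
    (α : Cell t b x y) (β : Cell t' b' y z) (γ : Cell t'' b'' z w),
    HEq (hcomp (hcomp α β) γ) (hcomp α (hcomp β γ))
  hid_hcomp : ∀ {t b : H} {x y : V} (α : Cell t b x y), HEq (hcomp (hid x) α) α
  hcomp_hid : ∀ {t b : H} {x y : V} (α : Cell t b x y), HEq (hcomp α (hid y)) α
  vcomp_assoc : ∀ {t m m' b : H} {x y x' y' x'' y'' : V}
    (α : Cell t m x y) (β : Cell m m' x' y') (γ : Cell m' b x'' y''),
    HEq (vcomp (vcomp α β) γ) (vcomp α (vcomp β γ))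
  vid_vcomp : ∀ {t b : H} {x y : V} (α : Cell t b x y), HEq (vcomp (vid t) α) α
  vcomp_vid : ∀ {t b : H} {x y : V} (α : Cell t b x y), HEq (vcomp α (vid b)) α
  /-- The horizontal and vertical identity cells on the units coincide. -/
  square_one : vid hOne = hid vOne
  /-- The interchange law `(α | γ) / (β | δ) = (α / β) | (γ / δ)`. -/
  interchange : ∀ {t m b t' m' b' : H} {x y z x' y' z' : V}
    (α : Cell t m x y) (γ : Cell t' m' y z) (β : Cell m b x' y') (δ : Cell m' b' y' z'),
    vcomp (hcomp α γ) (hcomp β δ) = hcomp (vcomp α β) (vcomp γ δ)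
  hid_mul : ∀ x y : V, HEq (vcomp (hid x) (hid y)) (hid (vMul x y))
  vid_mul : ∀ a b : H, HEq (hcomp (vid a) (vid b)) (vid (hMul a b))

namespace SODC

/-- Transport a cell along equalities of its boundaries. -/
def cast (D : SODC) {t t' b b' : D.H} {l l' r r' : D.V}
    (ht : t = t') (hb : b = b') (hl : l = l') (hr : r = r')
    (α : D.Cell t b l r) : D.Cell t' b' l' r' := by
  cases ht; cases hb; cases hl; cases hr; exact α

/-- `X` and `Y` are isomorphic objects of the strict monoidal category `H D` of
horizontal cells of `D`: there are cells (with trivial top and bottom boundary)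
`f : X → Y` and `g : Y → X` whose horizontal composites are identities. -/
def HIso (D : SODC) (X Y : D.V) : Prop :=
  ∃ (f : D.Cell D.hOne D.hOne X Y) (g : D.Cell D.hOne D.hOne Y X),
    HEq (D.hcomp f g) (D.hid X) ∧ HEq (D.hcomp g f) (D.hid Y)

/-- `Y` is a right dual of `X` in the strict monoidal category `H D` of
horizontal cells of `D`: there are a unit `η : I → X ⊗ Y` and a counit
`ε : Y ⊗ X → I` satisfying the two triangle (zig-zag) identities.  (In `H D`,
composition is horizontal composition of cells and the tensor of morphisms is
vertical composition of cells.) -/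
def RightDual (D : SODC) (X Y : D.V) : Prop :=
  ∃ (η : D.Cell D.hOne D.hOne D.vOne (D.vMul X Y))
    (ε : D.Cell D.hOne D.hOne (D.vMul Y X) D.vOne),
    HEq (D.hcomp (D.vcomp η (D.hid X))
          (D.cast rfl rfl (D.vMul_assoc X Y X).symm rfl (D.vcomp (D.hid X) ε)))
        (D.hid X) ∧
    HEq (D.hcomp (D.vcomp (D.hid Y) η)
          (D.cast rfl rfl (D.vMul_assoc Y X Y) rfl (D.vcomp ε (D.hid Y))))
        (D.hid Y)

end SODC

/-- A cornering structure on a single-object double category `D`.  The vertical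
cells of `D` (cells with trivial left and right boundary, composed vertically
and tensored horizontally) form a strict monoidal category `𝔸 = V D`, which is
required to be symmetric via the braiding cells `braid`; and every object
`a` of `𝔸` (element of `D.H`) has polarized objects `a^∘ = circ a` and
`a^• = bullet a` in `D.V` together with four corner cells satisfying the
yanking equations. -/
structure Cornering (D : SODC) where
  /-- The braiding `σ_{a,b} : a ⊗ b → b ⊗ a` of `𝔸 = V D`, as a vertical cell. -/
  braid : ∀ a b : D.H, D.Cell (D.hMul a b) (D.hMul b a) D.vOne D.vOne
  braid_natural : ∀ {a b c d : D.H}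
    (f : D.Cell a b D.vOne D.vOne) (g : D.Cell c d D.vOne D.vOne),
    D.vcomp (D.hcomp f g) (braid b d) = D.vcomp (braid a c) (D.hcomp g f)
  braid_symm : ∀ a b : D.H, HEq (D.vcomp (braid a b) (braid b a)) (D.vid (D.hMul a b))
  braid_hexagon : ∀ a b c : D.H,
    HEq (braid (D.hMul a b) c)
      (D.vcomp (D.hcomp (D.vid a) (braid b c))
        (D.cast (D.hMul_assoc a c b) (D.hMul_assoc c a b) rfl rfl
          (D.hcomp (braid a c) (D.vid b))))
  /-- The polarized object `a^∘`. -/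
  circ : D.H → D.V
  /-- The polarized object `a^•`. -/
  bullet : D.H → D.V
  /-- The `∘`-send corner: top `a`, bottom `I`, left `I`, right `a^∘`. -/
  csend : ∀ a : D.H, D.Cell a D.hOne D.vOne (circ a)
  /-- The `∘`-receive corner: top `I`, bottom `a`, left `a^∘`, right `I`. -/
  crecv : ∀ a : D.H, D.Cell D.hOne a (circ a) D.vOne
  /-- The `•`-send corner: top `a`, bottom `I`, left `a^•`, right `I`. -/
  bsend : ∀ a : D.H, D.Cell a D.hOne (bullet a) D.vOne
  /-- The `•`-receive corner: top `I`, bottom `a`, left `I`, right `a^•`. -/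
  brecv : ∀ a : D.H, D.Cell D.hOne a D.vOne (bullet a)
  yank_circ_h : ∀ a : D.H, HEq (D.hcomp (csend a) (crecv a)) (D.vid a)
  yank_circ_v : ∀ a : D.H, HEq (D.vcomp (crecv a) (csend a)) (D.hid (circ a))
  yank_bullet_h : ∀ a : D.H, HEq (D.hcomp (brecv a) (bsend a)) (D.vid a)
  yank_bullet_v : ∀ a : D.H, HEq (D.vcomp (brecv a) (bsend a)) (D.hid (bullet a))

/-- A compact closed structure on the symmetric strict monoidal category
`𝔸 = V D` of vertical cells of `D`: every object `a` has a chosen dual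
`dual a` with unit `η_a : I → a ⊗ a*` and counit `ε_a : a* ⊗ a → I`
(as vertical cells) satisfying the triangle (snake) identities. -/
structure CompactStructure (D : SODC) where
  dual : D.H → D.H
  eta : ∀ a : D.H, D.Cell D.hOne (D.hMul a (dual a)) D.vOne D.vOne
  eps : ∀ a : D.H, D.Cell (D.hMul (dual a) a) D.hOne D.vOne D.vOne
  snake₁ : ∀ a : D.H,
    HEq (D.vcomp (D.hcomp (eta a) (D.vid a))
          (D.cast (D.hMul_assoc a (dual a) a).symm rfl rfl rfl
            (D.hcomp (D.vid a) (eps a))))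
        (D.vid a)
  snake₂ : ∀ a : D.H,
    HEq (D.vcomp (D.hcomp (D.vid (dual a)) (eta a))
          (D.cast (D.hMul_assoc (dual a) a (dual a)) rfl rfl rfl
            (D.hcomp (eps a) (D.vid (dual a)))))
        (D.vid (dual a))

namespace SODC

lemma hcomp_congr (D : SODC) {t b u v t' b' u' v' : D.H} {x y z x' y' z' : D.V}
    (α : D.Cell t b x y) (β : D.Cell u v y z) (α' : D.Cell t' b' x' y')
    (β' : D.Cell u' v' y' z')
    (ht : t = t') (hb : b = b') (hu : u = u') (hv : v = v')
    (hx : x = x') (hy : y = y') (hz : z = z')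
    (hα : HEq α α') (hβ : HEq β β') : HEq (D.hcomp α β) (D.hcomp α' β') := by
  subst ht hb hu hv hx hy hz
  rw [eq_of_heq hα, eq_of_heq hβ]

lemma vcomp_congr (D : SODC) {t m b t' m' b' : D.H} {x y u v x' y' u' v' : D.V}
    (α : D.Cell t m x y) (β : D.Cell m b u v) (α' : D.Cell t' m' x' y')
    (β' : D.Cell m' b' u' v')
    (ht : t = t') (hm : m = m') (hb : b = b')
    (hx : x = x') (hy : y = y') (hu : u = u') (hv : v = v')
    (hα : HEq α α') (hβ : HEq β β') : HEq (D.vcomp α β) (D.vcomp α' β') := by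
  subst ht hm hb hx hy hu hv
  rw [eq_of_heq hα, eq_of_heq hβ]

/-- Eckmann–Hilton, version 1: for horizontal cells `α : X → I` and
`β : I → Y`, the horizontal composite agrees with the vertical composite. -/
lemma eh₁ (D : SODC) {X Y : D.V} (α : D.Cell D.hOne D.hOne X D.vOne)
    (β : D.Cell D.hOne D.hOne D.vOne Y) :
    HEq (D.hcomp α β) (D.vcomp α β) := by
  have h1 : HEq (D.hcomp α β)
      (D.hcomp (D.vcomp α (D.vid D.hOne)) (D.vcomp (D.vid D.hOne) β)) :=
    D.hcomp_congr α β _ _ rfl rfl rfl rfl (D.vMul_one X).symm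
      (D.vMul_one D.vOne).symm (D.vOne_mul Y).symm
      (D.vcomp_vid α).symm (D.vid_vcomp β).symm
  have h2 := (D.interchange α (D.vid D.hOne) (D.vid D.hOne) β).symm
  have h3 : HEq (D.vcomp (D.hcomp α (D.vid D.hOne)) (D.hcomp (D.vid D.hOne) β))
      (D.vcomp α β) := by
    refine D.vcomp_congr _ _ α β (D.hMul_one _) (D.hMul_one _) (D.hMul_one _)
      rfl rfl rfl rfl ?_ ?_
    · rw [D.square_one]; exact D.hcomp_hid α
    · rw [D.square_one]; exact D.hid_hcomp β
  exact (h1.trans (heq_of_eq h2)).trans h3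

/-- Eckmann–Hilton, version 2: for horizontal cells `α : X → I` and
`β : I → Y`, the horizontal composite `α | β` agrees with the vertical
composite `β / α`. -/
lemma eh₂ (D : SODC) {X Y : D.V} (α : D.Cell D.hOne D.hOne X D.vOne)
    (β : D.Cell D.hOne D.hOne D.vOne Y) :
    HEq (D.hcomp α β) (D.vcomp β α) := by
  have h1 : HEq (D.hcomp α β)
      (D.hcomp (D.vcomp (D.vid D.hOne) α) (D.vcomp β (D.vid D.hOne))) :=
    D.hcomp_congr α β _ _ rfl rfl rfl rfl (D.vOne_mul X).symm
      (D.vOne_mul D.vOne).symm (D.vMul_one Y).symm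
      (D.vid_vcomp α).symm (D.vcomp_vid β).symm
  have h2 := (D.interchange (D.vid D.hOne) β α (D.vid D.hOne)).symm
  have h3 : HEq (D.vcomp (D.hcomp (D.vid D.hOne) β) (D.hcomp α (D.vid D.hOne)))
      (D.vcomp β α) := by
    refine D.vcomp_congr _ _ β α (D.hMul_one _) (D.hMul_one _) (D.hMul_one _)
      rfl rfl rfl rfl ?_ ?_
    · rw [D.square_one]; exact D.hid_hcomp β
    · rw [D.square_one]; exact D.hcomp_hid α
  exact (h1.trans (heq_of_eq h2)).trans h3

end SODC

/-- Let `𝔸` be a symmetric strict monoidal category and `D` a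
cornering of `𝔸`.  Then in the strict monoidal category `H D` of horizontal
cells of `D`, the object `I^∘` is isomorphic to the monoidal unit `I`, and the
object `I^•` is isomorphic to the monoidal unit `I`; the isomorphism `I ≅ I^∘`
is given by the two `∘`-corner cells for the unit object `I` of `𝔸`, whose two
composites are identities, and similarly for `I^•`. -/
theorem unit_polarized_objects_iso_unit (D : SODC) (C : Cornering D) :
    (D.HIso (C.circ D.hOne) D.vOne ∧ D.HIso (C.bullet D.hOne) D.vOne) ∧
    (HEq (D.hcomp (C.csend D.hOne) (C.crecv D.hOne)) (D.hid D.vOne) ∧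
      HEq (D.hcomp (C.crecv D.hOne) (C.csend D.hOne)) (D.hid (C.circ D.hOne))) ∧
    (HEq (D.hcomp (C.brecv D.hOne) (C.bsend D.hOne)) (D.hid D.vOne) ∧
      HEq (D.hcomp (C.bsend D.hOne) (C.brecv D.hOne)) (D.hid (C.bullet D.hOne))) := by
  have yc : HEq (D.hcomp (C.csend D.hOne) (C.crecv D.hOne)) (D.hid D.vOne) :=
    (C.yank_circ_h D.hOne).trans (heq_of_eq D.square_one)
  have yc' : HEq (D.hcomp (C.crecv D.hOne) (C.csend D.hOne)) (D.hid (C.circ D.hOne)) :=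
    (D.eh₁ (C.crecv D.hOne) (C.csend D.hOne)).trans (C.yank_circ_v D.hOne)
  have yb : HEq (D.hcomp (C.brecv D.hOne) (C.bsend D.hOne)) (D.hid D.vOne) :=
    (C.yank_bullet_h D.hOne).trans (heq_of_eq D.square_one)
  have yb' : HEq (D.hcomp (C.bsend D.hOne) (C.brecv D.hOne)) (D.hid (C.bullet D.hOne)) :=
    (D.eh₂ (C.bsend D.hOne) (C.brecv D.hOne)).trans (C.yank_bullet_v D.hOne)
  exact ⟨⟨⟨C.crecv D.hOne, C.csend D.hOne, yc', yc⟩,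
          ⟨C.bsend D.hOne, C.brecv D.hOne, yb', yb⟩⟩, ⟨yc, yc'⟩, ⟨yb, yb'⟩⟩
end

section
/- Let 𝔸 be a symmetric strict monoidal category and let D be a cornering of 𝔸. Then for all objects A, B of 𝔸 there are isomorphisms (A ⊗ B)^∘ ≅ A^∘ ⊗ B^∘ and (A ⊗ B)^• ≅ A^• ⊗ B^• in the strict monoidal category H D of horizontal cells of D. -/
namespace SODC

variable {D : SODC}

theorem castHEq {t t' b b' : D.H} {l l' r r' : D.V}
    (ht : t = t') (hb : b = b') (hl : l = l') (hr : r = r')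
    (α : D.Cell t b l r) : HEq (D.cast ht hb hl hr α) α := by
  cases ht; cases hb; cases hl; cases hr; rfl

theorem hcongr {t₁ b₁ t₁' b₁' t₂ b₂ t₂' b₂' : D.H} {x₁ y₁ z₁ x₂ y₂ z₂ : D.V}
    {α₁ : D.Cell t₁ b₁ x₁ y₁} {β₁ : D.Cell t₁' b₁' y₁ z₁}
    {α₂ : D.Cell t₂ b₂ x₂ y₂} {β₂ : D.Cell t₂' b₂' y₂ z₂}
    (e₁ : t₁ = t₂) (e₂ : b₁ = b₂) (e₃ : t₁' = t₂') (e₄ : b₁' = b₂')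
    (e₅ : x₁ = x₂) (e₆ : y₁ = y₂) (e₇ : z₁ = z₂)
    (hα : HEq α₁ α₂) (hβ : HEq β₁ β₂) :
    HEq (D.hcomp α₁ β₁) (D.hcomp α₂ β₂) := by
  subst e₁ e₂ e₃ e₄ e₅ e₆ e₇
  rw [eq_of_heq hα, eq_of_heq hβ]

theorem vcongr {t₁ m₁ b₁ t₂ m₂ b₂ : D.H} {x₁ y₁ x₁' y₁' x₂ y₂ x₂' y₂' : D.V}
    {α₁ : D.Cell t₁ m₁ x₁ y₁} {β₁ : D.Cell m₁ b₁ x₁' y₁'}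
    {α₂ : D.Cell t₂ m₂ x₂ y₂} {β₂ : D.Cell m₂ b₂ x₂' y₂'}
    (e₁ : t₁ = t₂) (e₂ : m₁ = m₂) (e₃ : b₁ = b₂)
    (e₄ : x₁ = x₂) (e₅ : y₁ = y₂) (e₆ : x₁' = x₂') (e₇ : y₁' = y₂')
    (hα : HEq α₁ α₂) (hβ : HEq β₁ β₂) :
    HEq (D.vcomp α₁ β₁) (D.vcomp α₂ β₂) := by
  subst e₁ e₂ e₃ e₄ e₅ e₆ e₇
  rw [eq_of_heq hα, eq_of_heq hβ]

theorem hidc {x y : D.V} (h : x = y) : HEq (D.hid x) (D.hid y) := by rw [h]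

theorem vidc {a b : D.H} (h : a = b) : HEq (D.vid a) (D.vid b) := by rw [h]

theorem hcomp_vidOne {t b : D.H} {x : D.V} (α : D.Cell t b x D.vOne) :
    HEq (D.hcomp α (D.vid D.hOne)) α := by
  rw [D.square_one]; exact D.hcomp_hid α

theorem vidOne_hcomp {t b : D.H} {y : D.V} (α : D.Cell t b D.vOne y) :
    HEq (D.hcomp (D.vid D.hOne) α) α := by
  rw [D.square_one]; exact D.hid_hcomp α

theorem exchange {t m b t' m' b' : D.H} {x y z x' y' z' : D.V}
    {T B T' B' : D.H} {X Y Z : D.V}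
    {A : D.Cell T B X Y} {Cc : D.Cell T' B' Y Z}
    (α : D.Cell t m x y) (γ : D.Cell t' m' y z)
    (β : D.Cell m b x' y') (δ : D.Cell m' b' y' z')
    (eT : T = t) (eB : B = b) (eT' : T' = t') (eB' : B' = b')
    (eX : X = D.vMul x x') (eY : Y = D.vMul y y') (eZ : Z = D.vMul z z')
    (hA : HEq A (D.vcomp α β)) (hC : HEq Cc (D.vcomp γ δ)) :
    HEq (D.hcomp A Cc) (D.vcomp (D.hcomp α γ) (D.hcomp β δ)) :=
  (D.hcongr eT eB eT' eB' eX eY eZ hA hC).trans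
    (heq_of_eq (D.interchange α γ β δ)).symm

end SODC
section CircDefs
open SODC

variable (D : SODC) (C : Cornering D) (a b : D.H)

/-- Row: `a`-strand bends right into `a^∘`, with `b` passing on the left. -/
def cRow3 : D.Cell (D.hMul b a) b D.vOne (C.circ a) :=
  D.cast rfl (D.hMul_one b) rfl rfl (D.hcomp (D.vid b) (C.csend a))

/-- Lower part of `f`: turn `b·a` into `a^∘ ⊗ b^∘` on the right. -/
def cF2 : D.Cell (D.hMul b a) D.hOne D.vOne (D.vMul (C.circ a) (C.circ b)) :=
  D.cast rfl rfl (D.vOne_mul D.vOne) rfl (D.vcomp (cRow3 D C a b) (C.csend b))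

/-- Body of `f`: braid then split. -/
def cF : D.Cell (D.hMul a b) D.hOne D.vOne (D.vMul (C.circ a) (C.circ b)) :=
  D.cast rfl rfl (D.vOne_mul D.vOne) (D.vOne_mul _) (D.vcomp (C.braid a b) (cF2 D C a b))

/-- The forward map `(a⊗b)^∘ → a^∘ ⊗ b^∘`. -/
def cf : D.Cell D.hOne D.hOne (C.circ (D.hMul a b)) (D.vMul (C.circ a) (C.circ b)) :=
  D.cast rfl rfl (D.vMul_one _) (D.vOne_mul _) (D.vcomp (C.crecv (D.hMul a b)) (cF D C a b))

/-- Row: `b^∘` bends down into `b`, with `a` passing on the right. -/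
def cRow2g : D.Cell a (D.hMul b a) (C.circ b) D.vOne :=
  D.cast (D.hOne_mul a) rfl rfl rfl (D.hcomp (C.crecv b) (D.vid a))

/-- Lower part of `g`: braid then bend `a·b` into `(a⊗b)^∘`. -/
def cg2 : D.Cell (D.hMul b a) D.hOne D.vOne (C.circ (D.hMul a b)) :=
  D.cast rfl rfl (D.vOne_mul _) (D.vOne_mul _) (D.vcomp (C.braid b a) (C.csend (D.hMul a b)))

/-- Tail of `g`. -/
def cg' : D.Cell a D.hOne (C.circ b) (C.circ (D.hMul a b)) :=
  D.cast rfl rfl (D.vMul_one _) (D.vOne_mul _) (D.vcomp (cRow2g D C a b) (cg2 D C a b))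

/-- The backward map `a^∘ ⊗ b^∘ → (a⊗b)^∘`. -/
def cg : D.Cell D.hOne D.hOne (D.vMul (C.circ a) (C.circ b)) (C.circ (D.hMul a b)) :=
  D.cast rfl rfl rfl (D.vOne_mul _) (D.vcomp (C.crecv a) (cg' D C a b))

end CircDefs
section CircOne
open SODC

variable (D : SODC) (C : Cornering D) (a b : D.H)

theorem cRow3_yank : HEq (D.hcomp (cRow3 D C a b) (C.crecv a)) (D.vid (D.hMul b a)) :=
  ((D.hcongr rfl (D.hMul_one b).symm rfl rfl rfl rfl rfl
      (castHEq rfl (D.hMul_one b) rfl rfl _) HEq.rfl).trans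
    (D.hcomp_assoc (D.vid b) (C.csend a) (C.crecv a))).trans
    ((D.hcongr rfl rfl (D.hMul_one a) (D.hOne_mul a) rfl rfl rfl HEq.rfl
      (C.yank_circ_h a)).trans (D.vid_mul b a))

theorem cRow2g_yank : HEq (D.hcomp (C.csend b) (cRow2g D C a b)) (D.vid (D.hMul b a)) :=
  (((D.hcongr rfl rfl (D.hOne_mul a).symm rfl rfl rfl rfl HEq.rfl
      (castHEq (D.hOne_mul a) rfl rfl rfl _)).trans
    (D.hcomp_assoc (C.csend b) (C.crecv b) (D.vid a)).symm).trans
    (D.hcongr (D.hMul_one b) (D.hOne_mul b) rfl rfl rfl rfl rfl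
      (C.yank_circ_h b) HEq.rfl)).trans (D.vid_mul b a)

theorem circ_one :
    HEq (D.hcomp (cf D C a b) (cg D C a b)) (D.hid (C.circ (D.hMul a b))) := by
  -- step: `sb ⊚ cg' ≡ cg2`
  have h5 : HEq (D.hcomp (C.csend b) (cg' D C a b)) (cg2 D C a b) := by
    refine HEq.trans (exchange (C.csend b) (cRow2g D C a b) (D.vid D.hOne) (cg2 D C a b)
      rfl rfl rfl rfl (D.vOne_mul _).symm (D.vMul_one _).symm (D.vOne_mul _).symm
      (D.vcomp_vid (C.csend b)).symm (castHEq _ _ _ _ _)) ?_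
    refine HEq.trans (D.vcongr rfl (D.hOne_mul _) (D.hOne_mul _) rfl rfl rfl rfl
      (cRow2g_yank D C a b) (vidOne_hcomp (cg2 D C a b))) ?_
    exact D.vid_vcomp _
  -- step: `cF2 ⊚ cg ≡ cg2`
  have hF2g : HEq (D.hcomp (cF2 D C a b) (cg D C a b)) (cg2 D C a b) := by
    refine HEq.trans (exchange (cRow3 D C a b) (C.crecv a) (C.csend b) (cg' D C a b)
      rfl rfl rfl rfl (D.vOne_mul _).symm rfl (D.vOne_mul _).symm
      (castHEq _ _ _ _ _) (castHEq _ _ _ _ _)) ?_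
    refine HEq.trans (D.vcongr (D.hMul_one _) rfl (D.hOne_mul _) rfl rfl rfl rfl
      (cRow3_yank D C a b) (h5)) ?_
    exact D.vid_vcomp _
  -- step: `cF ⊚ cg ≡ csend (a·b)`
  have hFg : HEq (D.hcomp (cF D C a b) (cg D C a b)) (C.csend (D.hMul a b)) := by
    refine HEq.trans (exchange (C.braid a b) (D.vid D.hOne) (cF2 D C a b) (cg D C a b)
      rfl rfl rfl rfl (D.vOne_mul _).symm (D.vOne_mul _).symm (D.vOne_mul _).symm
      (castHEq _ _ _ _ _) (D.vid_vcomp (cg D C a b)).symm) ?_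
    refine HEq.trans (D.vcongr (D.hMul_one _) (D.hMul_one _) (D.hMul_one _) rfl rfl rfl rfl
      (hcomp_vidOne (C.braid a b)) hF2g) ?_
    refine HEq.trans (D.vcongr rfl rfl rfl rfl rfl (D.vOne_mul _).symm (D.vOne_mul _).symm
      HEq.rfl (castHEq _ _ _ _ _)) ?_
    refine HEq.trans (D.vcomp_assoc (C.braid a b) (C.braid b a)
      (C.csend (D.hMul a b))).symm ?_
    refine HEq.trans (D.vcongr rfl rfl rfl (D.vMul_one _) (D.vMul_one _) rfl rfl
      (C.braid_symm a b) HEq.rfl) ?_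
    exact D.vid_vcomp _
  -- assemble
  refine HEq.trans (exchange (C.crecv (D.hMul a b)) (D.vid D.hOne) (cF D C a b) (cg D C a b)
    rfl rfl rfl rfl (D.vMul_one _).symm (D.vOne_mul _).symm (D.vOne_mul _).symm
    (castHEq _ _ _ _ _) (D.vid_vcomp (cg D C a b)).symm) ?_
  refine HEq.trans (D.vcongr (D.hMul_one _) (D.hMul_one _) (D.hMul_one _) rfl rfl rfl rfl
    (hcomp_vidOne (C.crecv (D.hMul a b))) hFg) ?_
  exact C.yank_circ_v (D.hMul a b)

end CircOne
section CircTwo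
open SODC

variable (D : SODC) (C : Cornering D) (a b : D.H)

/-- The middle cell `b^∘ ⇒ a^∘` over `a`, under `b`. -/
def cMid : D.Cell a b (C.circ b) (C.circ a) :=
  D.cast (D.hOne_mul a) (D.hMul_one b) rfl rfl (D.hcomp (C.crecv b) (C.csend a))

theorem cMid_eq : HEq (D.vcomp (cRow2g D C a b) (cRow3 D C a b)) (cMid D C a b) := by
  refine HEq.trans (D.vcongr (D.hOne_mul a).symm rfl (D.hMul_one b).symm rfl rfl rfl rfl
    (castHEq _ _ _ _ _) (castHEq _ _ _ _ _)) ?_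
  refine HEq.trans (heq_of_eq (D.interchange (C.crecv b) (D.vid a) (D.vid b) (C.csend a))) ?_
  refine HEq.trans (D.hcongr rfl rfl rfl rfl (D.vMul_one _) (D.vOne_mul _) (D.vOne_mul _)
    (D.vcomp_vid (C.crecv b)) (D.vid_vcomp (C.csend a))) ?_
  exact (castHEq _ _ _ _ _).symm

theorem cInner : HEq (D.vcomp (C.crecv a) (cMid D C a b))
    (D.vcomp (D.hid (C.circ a)) (C.crecv b)) := by
  refine HEq.trans (D.vcongr (D.hMul_one D.hOne).symm (D.hOne_mul a).symm (D.hMul_one b).symm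
    rfl rfl rfl rfl (D.hid_hcomp (C.crecv a)).symm (castHEq _ _ _ _ _)) ?_
  refine HEq.trans (heq_of_eq (D.interchange (D.hid (C.circ a)) (C.crecv a)
    (C.crecv b) (C.csend a))) ?_
  refine HEq.trans (D.hcongr rfl rfl rfl rfl rfl rfl
    ((D.vOne_mul _).trans (D.vMul_one _).symm)
    HEq.rfl ((C.yank_circ_v a).trans (hidc (D.vMul_one _).symm))) ?_
  exact D.hcomp_hid _

theorem circ_two :
    HEq (D.hcomp (cg D C a b) (cf D C a b)) (D.hid (D.vMul (C.circ a) (C.circ b))) := by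
  -- `csend (a·b) ⊚ cf ≡ cF`
  have s3b : HEq (D.hcomp (C.csend (D.hMul a b)) (cf D C a b)) (cF D C a b) := by
    refine HEq.trans (exchange (C.csend (D.hMul a b)) (C.crecv (D.hMul a b))
      (D.vid D.hOne) (cF D C a b)
      rfl rfl rfl rfl (D.vOne_mul _).symm (D.vMul_one _).symm (D.vOne_mul _).symm
      (D.vcomp_vid (C.csend (D.hMul a b))).symm (castHEq _ _ _ _ _)) ?_
    refine HEq.trans (D.vcongr (D.hMul_one _) (D.hOne_mul _) (D.hOne_mul _) rfl rfl rfl rfl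
      (C.yank_circ_h (D.hMul a b)) (vidOne_hcomp (cF D C a b))) ?_
    exact D.vid_vcomp _
  -- `cg2 ⊚ cf ≡ cF2`
  have s3 : HEq (D.hcomp (cg2 D C a b) (cf D C a b)) (cF2 D C a b) := by
    refine HEq.trans (exchange (C.braid b a) (D.vid D.hOne)
      (C.csend (D.hMul a b)) (cf D C a b)
      rfl rfl rfl rfl (D.vOne_mul _).symm (D.vOne_mul _).symm (D.vOne_mul _).symm
      (castHEq _ _ _ _ _) (D.vid_vcomp (cf D C a b)).symm) ?_
    refine HEq.trans (D.vcongr (D.hMul_one _) (D.hMul_one _) (D.hMul_one _) rfl rfl rfl rfl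
      (hcomp_vidOne (C.braid b a)) s3b) ?_
    refine HEq.trans (D.vcongr rfl rfl rfl rfl rfl (D.vOne_mul _).symm (D.vOne_mul _).symm
      HEq.rfl (castHEq _ _ _ _ _)) ?_
    refine HEq.trans (D.vcomp_assoc (C.braid b a) (C.braid a b) (cF2 D C a b)).symm ?_
    refine HEq.trans (D.vcongr rfl rfl rfl (D.vMul_one _) (D.vMul_one _) rfl rfl
      (C.braid_symm b a) HEq.rfl) ?_
    exact D.vid_vcomp _
  -- `cg' ⊚ cf ≡ cMid / csend b`
  have s4 : HEq (D.hcomp (cg' D C a b) (cf D C a b))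
      (D.vcomp (cMid D C a b) (C.csend b)) := by
    refine HEq.trans (exchange (cRow2g D C a b) (D.vid D.hOne) (cg2 D C a b) (cf D C a b)
      rfl rfl rfl rfl (D.vMul_one _).symm (D.vOne_mul _).symm (D.vOne_mul _).symm
      (castHEq _ _ _ _ _) (D.vid_vcomp (cf D C a b)).symm) ?_
    refine HEq.trans (D.vcongr (D.hMul_one _) (D.hMul_one _) (D.hMul_one _) rfl rfl rfl rfl
      (hcomp_vidOne (cRow2g D C a b)) s3) ?_
    refine HEq.trans (D.vcongr rfl rfl rfl rfl rfl (D.vOne_mul _).symm rfl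
      HEq.rfl (castHEq _ _ _ _ _)) ?_
    refine HEq.trans (D.vcomp_assoc (cRow2g D C a b) (cRow3 D C a b) (C.csend b)).symm ?_
    exact D.vcongr rfl rfl rfl (D.vMul_one _) (D.vOne_mul _) rfl rfl
      (cMid_eq D C a b) HEq.rfl
  -- assemble
  refine HEq.trans (exchange (C.crecv a) (D.vid D.hOne) (cg' D C a b) (cf D C a b)
    rfl rfl rfl rfl rfl (D.vOne_mul _).symm (D.vOne_mul _).symm
    (castHEq _ _ _ _ _) (D.vid_vcomp (cf D C a b)).symm) ?_
  refine HEq.trans (D.vcongr (D.hMul_one _) (D.hMul_one _) (D.hMul_one _) rfl rfl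
    (D.vMul_one _).symm rfl (hcomp_vidOne (C.crecv a)) s4) ?_
  refine HEq.trans (D.vcomp_assoc (C.crecv a) (cMid D C a b) (C.csend b)).symm ?_
  refine HEq.trans (D.vcongr rfl rfl rfl rfl ((D.vOne_mul _).trans (D.vMul_one _).symm) rfl rfl
    (cInner D C a b) HEq.rfl) ?_
  refine HEq.trans (D.vcomp_assoc (D.hid (C.circ a)) (C.crecv b) (C.csend b)) ?_
  refine HEq.trans (D.vcongr rfl rfl rfl rfl rfl (D.vMul_one _) (D.vOne_mul _)
    HEq.rfl (C.yank_circ_v b)) ?_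
  exact D.hid_mul _ _

end CircTwo
section Bullet
open SODC

variable (D : SODC) (C : Cornering D) (a b : D.H)

/-- Row: `b^•` spawned to the right, with `a` passing on the left. -/
def bf2 : D.Cell a (D.hMul a b) D.vOne (C.bullet b) :=
  D.cast (D.hMul_one a) rfl rfl rfl (D.hcomp (D.vid a) (C.brecv b))

/-- Upper part of the forward map. -/
def bF : D.Cell D.hOne (D.hMul a b) D.vOne (D.vMul (C.bullet a) (C.bullet b)) :=
  D.cast rfl rfl (D.vOne_mul _) rfl (D.vcomp (C.brecv a) (bf2 D C a b))

/-- The forward map `(a⊗b)^• → a^• ⊗ b^•`. -/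
def bf : D.Cell D.hOne D.hOne (C.bullet (D.hMul a b)) (D.vMul (C.bullet a) (C.bullet b)) :=
  D.cast rfl rfl (by rw [D.vOne_mul, D.vOne_mul]) (by rw [D.vMul_one])
    (D.vcomp (C.brecv a) (D.vcomp (bf2 D C a b) (C.bsend (D.hMul a b))))

/-- Row: `a^•` absorbed from the left, with `b` passing on the right. -/
def bg2 : D.Cell (D.hMul a b) b (C.bullet a) D.vOne :=
  D.cast rfl (D.hOne_mul b) rfl rfl (D.hcomp (C.bsend a) (D.vid b))

/-- Lower part of the backward map. -/
def bG : D.Cell (D.hMul a b) D.hOne (D.vMul (C.bullet a) (C.bullet b)) D.vOne :=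
  D.cast rfl rfl rfl (D.vOne_mul _) (D.vcomp (bg2 D C a b) (C.bsend b))

/-- The backward map `a^• ⊗ b^• → (a⊗b)^•`. -/
def bg : D.Cell D.hOne D.hOne (D.vMul (C.bullet a) (C.bullet b)) (C.bullet (D.hMul a b)) :=
  D.cast rfl rfl (D.vOne_mul _) (by rw [D.vOne_mul, D.vMul_one])
    (D.vcomp (C.brecv (D.hMul a b)) (D.vcomp (bg2 D C a b) (C.bsend b)))

theorem bg_split : HEq (bg D C a b)
    (D.vcomp (C.brecv (D.hMul a b)) (bG D C a b)) :=
  (castHEq _ _ _ _ _).trans (D.vcongr rfl rfl rfl rfl rfl rfl (D.vOne_mul _)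
    HEq.rfl (castHEq _ _ _ _ _).symm)

theorem bg2_yank : HEq (D.hcomp (C.brecv a) (bg2 D C a b)) (D.vid (D.hMul a b)) :=
  ((D.hcongr rfl rfl rfl (D.hOne_mul b).symm rfl rfl rfl HEq.rfl
      (castHEq rfl (D.hOne_mul b) rfl rfl _)).trans
    (D.hcomp_assoc (C.brecv a) (C.bsend a) (D.vid b)).symm).trans
    ((D.hcongr (D.hOne_mul a) (D.hMul_one a) rfl rfl rfl rfl rfl
      (C.yank_bullet_h a) HEq.rfl).trans (D.vid_mul a b))

theorem bf2_yank : HEq (D.hcomp (bf2 D C a b) (C.bsend b)) (D.vid (D.hMul a b)) :=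
  ((D.hcongr (D.hMul_one a).symm rfl rfl rfl rfl rfl rfl
      (castHEq (D.hMul_one a) rfl rfl rfl _) HEq.rfl).trans
    (D.hcomp_assoc (D.vid a) (C.brecv b) (C.bsend b))).trans
    ((D.hcongr rfl rfl (D.hOne_mul b) (D.hMul_one b) rfl rfl rfl HEq.rfl
      (C.yank_bullet_h b)).trans (D.vid_mul a b))

theorem bullet_one :
    HEq (D.hcomp (bf D C a b) (bg D C a b)) (D.hid (C.bullet (D.hMul a b))) := by
  -- `bf ⊚ bG ≡ bsend (a·b)`
  have hfbG : HEq (D.hcomp (bf D C a b) (bG D C a b)) (C.bsend (D.hMul a b)) := by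
    refine HEq.trans (exchange (C.brecv a) (bg2 D C a b)
      (D.vcomp (bf2 D C a b) (C.bsend (D.hMul a b)))
      (D.vcomp (C.bsend b) (D.vid D.hOne))
      rfl rfl rfl rfl (by rw [D.vOne_mul, D.vOne_mul]) (by rw [D.vMul_one])
      (by rw [D.vOne_mul, D.vOne_mul])
      (castHEq _ _ _ _ _)
      ((castHEq _ _ _ _ _).trans (D.vcongr rfl rfl rfl rfl rfl (D.vMul_one _).symm
        (D.vOne_mul _).symm HEq.rfl (D.vcomp_vid (C.bsend b)).symm))) ?_
    refine HEq.trans (D.vcongr (D.hOne_mul _) rfl (D.hMul_one _) rfl rfl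
      (D.vOne_mul _) (D.vOne_mul _) (bg2_yank D C a b)
      ((heq_of_eq (D.interchange (bf2 D C a b) (C.bsend b)
        (C.bsend (D.hMul a b)) (D.vid D.hOne))).symm.trans
        ((D.vcongr rfl (D.hMul_one _) (D.hMul_one _) rfl rfl rfl rfl
          (bf2_yank D C a b) (hcomp_vidOne (C.bsend (D.hMul a b)))).trans
          (D.vid_vcomp (C.bsend (D.hMul a b)))))) ?_
    exact D.vid_vcomp _
  refine HEq.trans (exchange (D.vid D.hOne) (C.brecv (D.hMul a b))
    (bf D C a b) (bG D C a b)
    rfl rfl rfl rfl (D.vOne_mul _).symm (D.vOne_mul _).symm (D.vMul_one _).symm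
    (D.vid_vcomp (bf D C a b)).symm (bg_split D C a b)) ?_
  refine HEq.trans (D.vcongr (D.hMul_one _) (D.hOne_mul _) (D.hOne_mul _) rfl rfl rfl rfl
    (vidOne_hcomp (C.brecv (D.hMul a b))) hfbG) ?_
  exact C.yank_bullet_v (D.hMul a b)

end Bullet
section BulletTwo
open SODC

variable (D : SODC) (C : Cornering D) (a b : D.H)

/-- The middle cell `a^• ⇒ b^•` over `a`, under `b`. -/
def bMid : D.Cell a b (C.bullet a) (C.bullet b) :=
  D.cast (D.hMul_one a) (D.hOne_mul b) rfl rfl (D.hcomp (C.bsend a) (C.brecv b))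

theorem bMid_eq : HEq (D.vcomp (bf2 D C a b) (bg2 D C a b)) (bMid D C a b) := by
  refine HEq.trans (D.vcongr (D.hMul_one a).symm rfl (D.hOne_mul b).symm rfl rfl rfl rfl
    (castHEq _ _ _ _ _) (castHEq _ _ _ _ _)) ?_
  refine HEq.trans (heq_of_eq (D.interchange (D.vid a) (C.brecv b) (C.bsend a) (D.vid b))) ?_
  refine HEq.trans (D.hcongr rfl rfl rfl rfl (D.vOne_mul _) (D.vOne_mul _) (D.vMul_one _)
    (D.vid_vcomp (C.bsend a)) (D.vcomp_vid (C.brecv b))) ?_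
  exact (castHEq _ _ _ _ _).symm

theorem bInner : HEq (D.vcomp (C.brecv a) (bMid D C a b))
    (D.vcomp (D.hid (C.bullet a)) (C.brecv b)) := by
  refine HEq.trans (D.vcongr (D.hMul_one D.hOne).symm (D.hMul_one a).symm (D.hOne_mul b).symm
    rfl rfl rfl rfl (D.hcomp_hid (C.brecv a)).symm (castHEq _ _ _ _ _)) ?_
  refine HEq.trans (heq_of_eq (D.interchange (C.brecv a) (D.hid (C.bullet a))
    (C.bsend a) (C.brecv b))) ?_
  refine HEq.trans (D.hcongr rfl rfl rfl rfl
    ((D.vOne_mul _).trans (D.vMul_one _).symm) rfl rfl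
    ((C.yank_bullet_v a).trans (hidc (D.vMul_one _).symm)) HEq.rfl) ?_
  exact D.hid_hcomp _

theorem bf_split : HEq (bf D C a b)
    (D.vcomp (bF D C a b) (C.bsend (D.hMul a b))) :=
  ((castHEq _ _ _ _ _).trans
    (D.vcomp_assoc (C.brecv a) (bf2 D C a b) (C.bsend (D.hMul a b))).symm).trans
    (D.vcongr rfl rfl rfl (D.vOne_mul _) rfl rfl rfl (castHEq _ _ _ _ _).symm HEq.rfl)

theorem bullet_two :
    HEq (D.hcomp (bg D C a b) (bf D C a b))
      (D.hid (D.vMul (C.bullet a) (C.bullet b))) := by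
  -- rewrite `bf` with a zig-zag in the `(a·b)^•` string
  have u0 : HEq (bf D C a b)
      (D.vcomp (D.hcomp (C.brecv (D.hMul a b)) (bf D C a b))
        (D.hcomp (C.bsend (D.hMul a b)) (D.vid D.hOne))) := by
    refine HEq.symm ?_
    refine HEq.trans (heq_of_eq (D.interchange (C.brecv (D.hMul a b)) (bf D C a b)
      (C.bsend (D.hMul a b)) (D.vid D.hOne))) ?_
    refine HEq.trans (D.hcongr rfl rfl rfl rfl (D.vOne_mul _) (D.vMul_one _) (D.vMul_one _)
      (C.yank_bullet_v (D.hMul a b)) (D.vcomp_vid (bf D C a b))) ?_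
    exact D.hid_hcomp _
  -- `(brecv (a·b)) ⊚ bf ≡ bF`
  have u2 : HEq (D.hcomp (C.brecv (D.hMul a b)) (bf D C a b)) (bF D C a b) := by
    refine HEq.trans (exchange (D.vid D.hOne) (bF D C a b)
      (C.brecv (D.hMul a b)) (C.bsend (D.hMul a b))
      rfl rfl rfl rfl (D.vOne_mul _).symm (D.vOne_mul _).symm (D.vMul_one _).symm
      (D.vid_vcomp (C.brecv (D.hMul a b))).symm (bf_split D C a b)) ?_
    refine HEq.trans (D.vcongr (D.hOne_mul _) (D.hOne_mul _) (D.hMul_one _) rfl rfl rfl rfl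
      (vidOne_hcomp (bF D C a b)) (C.yank_bullet_h (D.hMul a b))) ?_
    exact D.vcomp_vid _
  -- `bg ⊚ (bsend (a·b) | vid 1) ≡ bG`
  have u3 : HEq (D.hcomp (bg D C a b)
      (D.hcomp (C.bsend (D.hMul a b)) (D.vid D.hOne))) (bG D C a b) := by
    refine HEq.trans (exchange (C.brecv (D.hMul a b)) (C.bsend (D.hMul a b))
      (bG D C a b) (D.vid D.hOne)
      rfl rfl (D.hMul_one _) (D.hOne_mul _) (D.vOne_mul _).symm (D.vMul_one _).symm
      (D.vOne_mul _).symm (bg_split D C a b)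
      ((hcomp_vidOne (C.bsend (D.hMul a b))).trans
        (D.vcomp_vid (C.bsend (D.hMul a b))).symm)) ?_
    refine HEq.trans (D.vcongr (D.hOne_mul _) (D.hMul_one _) (D.hMul_one _) rfl rfl rfl rfl
      (C.yank_bullet_h (D.hMul a b)) (hcomp_vidOne (bG D C a b))) ?_
    exact D.vid_vcomp _
  -- reduce to `bF / bG`
  have u4 : HEq (D.hcomp (bg D C a b) (bf D C a b))
      (D.vcomp (bF D C a b) (bG D C a b)) := by
    refine HEq.trans (exchange (D.vid D.hOne)
      (D.hcomp (C.brecv (D.hMul a b)) (bf D C a b))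
      (bg D C a b) (D.hcomp (C.bsend (D.hMul a b)) (D.vid D.hOne))
      rfl rfl (D.hMul_one _).symm (D.hMul_one _).symm
      (D.vOne_mul _).symm (D.vOne_mul _).symm (D.vMul_one _).symm
      (D.vid_vcomp (bg D C a b)).symm u0) ?_
    exact D.vcongr (by rw [D.hOne_mul, D.hOne_mul]) (by rw [D.hOne_mul, D.hMul_one])
      (by rw [D.hOne_mul, D.hOne_mul]) rfl rfl rfl rfl
      ((vidOne_hcomp _).trans u2) u3
  refine HEq.trans u4 ?_
  -- unfold and reassociate
  refine HEq.trans (D.vcongr rfl rfl rfl (D.vOne_mul _).symm rfl rfl (D.vOne_mul _).symm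
    (castHEq _ _ _ _ _) (castHEq _ _ _ _ _)) ?_
  refine HEq.trans (D.vcomp_assoc (C.brecv a) (bf2 D C a b)
    (D.vcomp (bg2 D C a b) (C.bsend b))) ?_
  refine HEq.trans (D.vcongr rfl rfl rfl rfl rfl (D.vOne_mul _) (by rw [D.vOne_mul])
    HEq.rfl ((D.vcomp_assoc (bf2 D C a b) (bg2 D C a b) (C.bsend b)).symm.trans
      (D.vcongr rfl rfl rfl (D.vOne_mul _) (D.vMul_one _) rfl rfl
        (bMid_eq D C a b) HEq.rfl))) ?_
  refine HEq.trans (D.vcomp_assoc (C.brecv a) (bMid D C a b) (C.bsend b)).symm ?_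
  refine HEq.trans (D.vcongr rfl rfl rfl ((D.vOne_mul _).trans (D.vMul_one _).symm) rfl rfl rfl
    (bInner D C a b) HEq.rfl) ?_
  refine HEq.trans (D.vcomp_assoc (D.hid (C.bullet a)) (C.brecv b) (C.bsend b)) ?_
  refine HEq.trans (D.vcongr rfl rfl rfl rfl rfl (D.vOne_mul _) (D.vMul_one _)
    HEq.rfl (C.yank_bullet_v b)) ?_
  exact D.hid_mul _ _

end BulletTwo

/-- Let `𝔸` be a symmetric strict monoidal category and `D` a
cornering of `𝔸`.  Then for all objects `A, B` of `𝔸` there are isomorphisms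
`(A ⊗ B)^∘ ≅ A^∘ ⊗ B^∘` and `(A ⊗ B)^• ≅ A^• ⊗ B^•` in the strict monoidal
category `H D` of horizontal cells of `D`. -/
theorem polarized_tensor_split_iso (D : SODC) (C : Cornering D) :
    ∀ a b : D.H,
      D.HIso (C.circ (D.hMul a b)) (D.vMul (C.circ a) (C.circ b)) ∧
      D.HIso (C.bullet (D.hMul a b)) (D.vMul (C.bullet a) (C.bullet b)) := by
  intro a b
  exact ⟨⟨cf D C a b, cg D C a b, circ_one D C a b, circ_two D C a b⟩,
    ⟨bf D C a b, bg D C a b, bullet_one D C a b, bullet_two D C a b⟩⟩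
end

section
/- Let 𝔸 be a compact closed symmetric strict monoidal category and let D be a cornering of 𝔸. Then for every object A of 𝔸 there is an isomorphism A^∘ ≅ (A*)^• in the strict monoidal category H D of horizontal cells of D, where A* is the dual of A in 𝔸. -/
namespace SODC

variable {D : SODC}

/-- Heterogeneous equality of cells together with equality of all four
boundaries. -/
def CEq {t b t' b' : D.H} {l r l' r' : D.V}
    (α : D.Cell t b l r) (β : D.Cell t' b' l' r') : Prop :=
  t = t' ∧ b = b' ∧ l = l' ∧ r = r' ∧ HEq α β

namespace CEq

theorem refl {t b : D.H} {l r : D.V} (α : D.Cell t b l r) : CEq α α :=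
  ⟨rfl, rfl, rfl, rfl, HEq.rfl⟩

theorem symm {t b t' b' : D.H} {l r l' r' : D.V}
    {α : D.Cell t b l r} {β : D.Cell t' b' l' r'} (h : CEq α β) : CEq β α :=
  ⟨h.1.symm, h.2.1.symm, h.2.2.1.symm, h.2.2.2.1.symm, h.2.2.2.2.symm⟩

theorem trans {t₁ b₁ t₂ b₂ t₃ b₃ : D.H} {l₁ r₁ l₂ r₂ l₃ r₃ : D.V}
    {α : D.Cell t₁ b₁ l₁ r₁} {β : D.Cell t₂ b₂ l₂ r₂} {γ : D.Cell t₃ b₃ l₃ r₃}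
    (h : CEq α β) (h' : CEq β γ) : CEq α γ :=
  ⟨h.1.trans h'.1, h.2.1.trans h'.2.1, h.2.2.1.trans h'.2.2.1,
   h.2.2.2.1.trans h'.2.2.2.1, h.2.2.2.2.trans h'.2.2.2.2⟩

theorem heq {t b t' b' : D.H} {l r l' r' : D.V}
    {α : D.Cell t b l r} {β : D.Cell t' b' l' r'} (h : CEq α β) : HEq α β :=
  h.2.2.2.2

end CEq

theorem ceq_of_eq {t b : D.H} {l r : D.V} {α β : D.Cell t b l r} (h : α = β) :
    CEq α β := ⟨rfl, rfl, rfl, rfl, heq_of_eq h⟩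

theorem ceq_cast {t t' b b' : D.H} {l l' r r' : D.V}
    (ht : t = t') (hb : b = b') (hl : l = l') (hr : r = r')
    (α : D.Cell t b l r) : CEq (D.cast ht hb hl hr α) α := by
  subst ht hb hl hr; exact CEq.refl α

theorem CEq.hcomp {t₁ b₁ t₂ b₂ s₁ c₁ s₂ c₂ : D.H} {x y z x' y' z' : D.V}
    {α : D.Cell t₁ b₁ x y} {β : D.Cell t₂ b₂ y z}
    {α' : D.Cell s₁ c₁ x' y'} {β' : D.Cell s₂ c₂ y' z'}
    (hα : CEq α α') (hβ : CEq β β') : CEq (D.hcomp α β) (D.hcomp α' β') := by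
  obtain ⟨h1, h2, h3, h4, h5⟩ := hα
  subst h1; subst h2; subst h3; subst h4
  obtain ⟨g1, g2, g3, g4, g5⟩ := hβ
  subst g1; subst g2; subst g4
  cases h5; cases g5
  exact CEq.refl _

theorem CEq.vcomp {t₁ m₁ b₁ t₂ b₂ : D.H} {x₁ y₁ x₁' y₁' x₂ y₂ x₂' y₂' : D.V}
    {m₂ : D.H}
    {α : D.Cell t₁ m₁ x₁ y₁} {β : D.Cell m₁ b₁ x₁' y₁'}
    {α' : D.Cell t₂ m₂ x₂ y₂} {β' : D.Cell m₂ b₂ x₂' y₂'}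
    (hα : CEq α α') (hβ : CEq β β') : CEq (D.vcomp α β) (D.vcomp α' β') := by
  obtain ⟨h1, h2, h3, h4, h5⟩ := hα
  subst h1; subst h2; subst h3; subst h4
  obtain ⟨g1, g2, g3, g4, g5⟩ := hβ
  subst g2; subst g3; subst g4
  cases h5; cases g5
  exact CEq.refl _

/- Lifted axioms. -/

theorem hcomp_assoc' {t b t' b' t'' b'' : D.H} {x y z w : D.V}
    (α : D.Cell t b x y) (β : D.Cell t' b' y z) (γ : D.Cell t'' b'' z w) :
    CEq (D.hcomp (D.hcomp α β) γ) (D.hcomp α (D.hcomp β γ)) :=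
  ⟨D.hMul_assoc _ _ _, D.hMul_assoc _ _ _, rfl, rfl, D.hcomp_assoc α β γ⟩

theorem vcomp_assoc' {t m m' b : D.H} {x y x' y' x'' y'' : D.V}
    (α : D.Cell t m x y) (β : D.Cell m m' x' y') (γ : D.Cell m' b x'' y'') :
    CEq (D.vcomp (D.vcomp α β) γ) (D.vcomp α (D.vcomp β γ)) :=
  ⟨rfl, rfl, D.vMul_assoc _ _ _, D.vMul_assoc _ _ _, D.vcomp_assoc α β γ⟩

theorem hid_hcomp' {t b : D.H} {x y : D.V} (α : D.Cell t b x y) :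
    CEq (D.hcomp (D.hid x) α) α :=
  ⟨D.hOne_mul _, D.hOne_mul _, rfl, rfl, D.hid_hcomp α⟩

theorem hcomp_hid' {t b : D.H} {x y : D.V} (α : D.Cell t b x y) :
    CEq (D.hcomp α (D.hid y)) α :=
  ⟨D.hMul_one _, D.hMul_one _, rfl, rfl, D.hcomp_hid α⟩

theorem vid_vcomp' {t b : D.H} {x y : D.V} (α : D.Cell t b x y) :
    CEq (D.vcomp (D.vid t) α) α :=
  ⟨rfl, rfl, D.vOne_mul _, D.vOne_mul _, D.vid_vcomp α⟩

theorem vcomp_vid' {t b : D.H} {x y : D.V} (α : D.Cell t b x y) :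
    CEq (D.vcomp α (D.vid b)) α :=
  ⟨rfl, rfl, D.vMul_one _, D.vMul_one _, D.vcomp_vid α⟩

theorem square_one' : CEq (D.vid D.hOne) (D.hid D.vOne) :=
  ceq_of_eq D.square_one

theorem vid_mul' (a b : D.H) : CEq (D.hcomp (D.vid a) (D.vid b)) (D.vid (D.hMul a b)) :=
  ⟨rfl, rfl, rfl, rfl, D.vid_mul a b⟩

theorem vid_congr {a a' : D.H} (h : a = a') : CEq (D.vid a) (D.vid a') := by
  subst h; exact CEq.refl _

/- Generalized absorption lemmas. -/

theorem vcomp_vidr {t m b s : D.H} {x y x' y' : D.V}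
    {β : D.Cell m b x' y'} (hβ : CEq β (D.vid s)) (α : D.Cell t m x y) :
    CEq (D.vcomp α β) α := by
  obtain ⟨h1, h2, h3, h4, h5⟩ := hβ
  subst h1; subst h2; subst h3; subst h4
  cases h5
  exact vcomp_vid' α

theorem vcomp_vidl {t m b s : D.H} {x y x' y' : D.V}
    {α : D.Cell t m x y} (hα : CEq α (D.vid s)) (β : D.Cell m b x' y') :
    CEq (D.vcomp α β) β := by
  obtain ⟨h1, h2, h3, h4, h5⟩ := hα
  subst h1; subst h2; subst h3; subst h4
  cases h5
  exact vid_vcomp' β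

theorem hcomp_vidoner {t b t' b' : D.H} {x y z : D.V}
    {β : D.Cell t' b' y z} (hβ : CEq β (D.vid D.hOne)) (α : D.Cell t b x y) :
    CEq (D.hcomp α β) α := by
  obtain ⟨h1, h2, h3, h4, h5⟩ := hβ
  subst h1; subst h2; subst h3; subst h4
  cases h5
  exact (CEq.hcomp (CEq.refl α) square_one').trans (hcomp_hid' α)

theorem hcomp_vidonel {t b t' b' : D.H} {x y z : D.V}
    {α : D.Cell t b x y} (hα : CEq α (D.vid D.hOne)) (β : D.Cell t' b' y z) :
    CEq (D.hcomp α β) β := by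
  obtain ⟨h1, h2, h3, h4, h5⟩ := hα
  subst h1; subst h2; subst h3; subst h4
  cases h5
  exact (CEq.hcomp square_one' (CEq.refl β)).trans (hid_hcomp' β)

/- Composition with a cast on the junction. -/

def vcc {t m m' b : D.H} {x y x' y' : D.V}
    (α : D.Cell t m x y) (h : m' = m) (β : D.Cell m' b x' y') :
    D.Cell t b (D.vMul x x') (D.vMul y y') :=
  D.vcomp α (D.cast h rfl rfl rfl β)

theorem vcc_congr {t₁ m₁ m₁' b₁ t₂ m₂ m₂' b₂ : D.H}
    {x₁ y₁ x₁' y₁' x₂ y₂ x₂' y₂' : D.V}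
    {α : D.Cell t₁ m₁ x₁ y₁} {β : D.Cell m₁' b₁ x₁' y₁'}
    {α' : D.Cell t₂ m₂ x₂ y₂} {β' : D.Cell m₂' b₂ x₂' y₂'}
    (hα : CEq α α') (hβ : CEq β β') (h : m₁' = m₁) (h' : m₂' = m₂) :
    CEq (vcc α h β) (vcc α' h' β') := by
  subst h; subst h'
  exact CEq.vcomp hα hβ

theorem vcc_assoc {t m m₂ m' m₂' b : D.H} {x y x' y' x'' y'' : D.V}
    (α : D.Cell t m x y) (h1 : m₂ = m) (β : D.Cell m₂ m' x' y')
    (h2 : m₂' = m') (γ : D.Cell m₂' b x'' y'') :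
    CEq (vcc (vcc α h1 β) h2 γ) (vcc α h1 (vcc β h2 γ)) := by
  subst h1; subst h2
  exact vcomp_assoc' α β γ

theorem vcc_vidl {t m m' b s : D.H} {x y x' y' : D.V}
    {α : D.Cell t m x y} (hα : CEq α (D.vid s)) (h : m' = m)
    (β : D.Cell m' b x' y') : CEq (vcc α h β) β := by
  subst h
  exact vcomp_vidl hα β

theorem vcc_vidr {t m m' b s : D.H} {x y x' y' : D.V}
    (α : D.Cell t m x y) (h : m' = m)
    {β : D.Cell m' b x' y'} (hβ : CEq β (D.vid s)) : CEq (vcc α h β) α := by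
  subst h
  exact vcomp_vidr hβ α

/- Staircase lemmas. -/

theorem st1 {t b t' b' : D.H} {x z : D.V}
    (α : D.Cell t b x D.vOne) (β : D.Cell t' b' D.vOne z) :
    CEq (D.hcomp α β) (D.vcomp (D.hcomp α (D.vid t')) (D.hcomp (D.vid b) β)) :=
  (CEq.hcomp (vcomp_vid' α).symm (vid_vcomp' β).symm).trans
    (ceq_of_eq (D.interchange α (D.vid t') (D.vid b) β)).symm

theorem st2 {t b t' b' : D.H} {x z : D.V}
    (α : D.Cell t b x D.vOne) (β : D.Cell t' b' D.vOne z) :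
    CEq (D.hcomp α β) (D.vcomp (D.hcomp (D.vid t) β) (D.hcomp α (D.vid b'))) :=
  (CEq.hcomp (vid_vcomp' α).symm (vcomp_vid' β).symm).trans
    (ceq_of_eq (D.interchange (D.vid t) β α (D.vid b'))).symm

end SODC
namespace SODC

variable {D : SODC}

/- Lifted cornering axioms. -/

theorem yank_circ_h' (C : Cornering D) (a : D.H) :
    CEq (D.hcomp (C.csend a) (C.crecv a)) (D.vid a) :=
  ⟨D.hMul_one a, D.hOne_mul a, rfl, rfl, C.yank_circ_h a⟩

theorem yank_circ_v' (C : Cornering D) (a : D.H) :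
    CEq (D.vcomp (C.crecv a) (C.csend a)) (D.hid (C.circ a)) :=
  ⟨rfl, rfl, D.vMul_one _, D.vOne_mul _, C.yank_circ_v a⟩

theorem yank_bullet_h' (C : Cornering D) (a : D.H) :
    CEq (D.hcomp (C.brecv a) (C.bsend a)) (D.vid a) :=
  ⟨D.hOne_mul a, D.hMul_one a, rfl, rfl, C.yank_bullet_h a⟩

theorem yank_bullet_v' (C : Cornering D) (a : D.H) :
    CEq (D.vcomp (C.brecv a) (C.bsend a)) (D.hid (C.bullet a)) :=
  ⟨rfl, rfl, D.vOne_mul _, D.vMul_one _, C.yank_bullet_v a⟩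

theorem braid_symm' (C : Cornering D) (a b : D.H) :
    CEq (D.vcomp (C.braid a b) (C.braid b a)) (D.vid (D.hMul a b)) :=
  ⟨rfl, rfl, D.vOne_mul _, D.vOne_mul _, C.braid_symm a b⟩

theorem hexagon' (C : Cornering D) (a b c : D.H) :
    CEq (C.braid (D.hMul a b) c)
      (D.vcomp (D.hcomp (D.vid a) (C.braid b c))
        (D.cast (D.hMul_assoc a c b) (D.hMul_assoc c a b) rfl rfl
          (D.hcomp (C.braid a c) (D.vid b)))) :=
  ⟨D.hMul_assoc a b c, rfl, (D.vOne_mul _).symm, (D.vOne_mul _).symm,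
    C.braid_hexagon a b c⟩

theorem braid_congr (C : Cornering D) {a a' b b' : D.H} (h : a = a') (h' : b = b') :
    CEq (C.braid a b) (C.braid a' b') := by
  subst h; subst h'; exact CEq.refl _

/- Unit laws for the braiding. -/

theorem braid_one_left (C : Cornering D) (c : D.H) :
    CEq (C.braid D.hOne c) (D.vid c) := by
  set s := C.braid D.hOne c with hs
  set s' := C.braid c D.hOne with hs'
  -- hexagon with a = b = 1
  have hA : CEq (D.hcomp (D.vid D.hOne) s) s := hcomp_vidonel (CEq.refl _) s
  have hX : CEq (D.cast (D.hMul_assoc D.hOne c D.hOne) (D.hMul_assoc c D.hOne D.hOne)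
      rfl rfl (D.hcomp s (D.vid D.hOne))) s :=
    (ceq_cast _ _ _ _ _).trans (hcomp_vidoner (CEq.refl _) s)
  have hhex : CEq (C.braid (D.hMul D.hOne D.hOne) c)
      (D.vcomp (D.hcomp (D.vid D.hOne) s)
        (D.cast (D.hMul_assoc D.hOne c D.hOne) (D.hMul_assoc c D.hOne D.hOne)
          rfl rfl (D.hcomp s (D.vid D.hOne)))) := hexagon' C D.hOne D.hOne c
  have hbb : CEq (C.braid (D.hMul D.hOne D.hOne) c) s :=
    braid_congr C (D.hOne_mul D.hOne) rfl
  -- s ≈ (the hexagon composite)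
  have h1 : CEq s (D.vcomp (D.hcomp (D.vid D.hOne) s)
      (D.cast (D.hMul_assoc D.hOne c D.hOne) (D.hMul_assoc c D.hOne D.hOne)
        rfl rfl (D.hcomp s (D.vid D.hOne)))) := hbb.symm.trans hhex
  -- post-compose with s' (suitably cast)
  have hy : D.hMul c D.hOne = D.hMul c (D.hMul D.hOne D.hOne) := by
    rw [D.hOne_mul]
  -- E := (hexagon composite) ; s'
  have hE1 : CEq (vcc (D.vcomp (D.hcomp (D.vid D.hOne) s)
        (D.cast (D.hMul_assoc D.hOne c D.hOne) (D.hMul_assoc c D.hOne D.hOne)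
          rfl rfl (D.hcomp s (D.vid D.hOne)))) hy s')
      (D.vcomp (D.hcomp (D.vid D.hOne) s)
        (vcc (D.cast (D.hMul_assoc D.hOne c D.hOne) (D.hMul_assoc c D.hOne D.hOne)
          rfl rfl (D.hcomp s (D.vid D.hOne))) hy s')) :=
    vcc_assoc _ rfl _ hy s'
  have hXY : CEq (vcc (D.cast (D.hMul_assoc D.hOne c D.hOne) (D.hMul_assoc c D.hOne D.hOne)
      rfl rfl (D.hcomp s (D.vid D.hOne))) hy s') (D.vid (D.hMul D.hOne c)) :=
    (vcc_congr hX (CEq.refl s') hy rfl).trans (braid_symm' C D.hOne c)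
  have hE2 : CEq (vcc (D.vcomp (D.hcomp (D.vid D.hOne) s)
        (D.cast (D.hMul_assoc D.hOne c D.hOne) (D.hMul_assoc c D.hOne D.hOne)
          rfl rfl (D.hcomp s (D.vid D.hOne)))) hy s') s :=
    hE1.trans ((vcomp_vidr hXY _).trans hA)
  -- on the other hand E ≈ s ; s' ≈ vid
  have hE3 : CEq (vcc (D.vcomp (D.hcomp (D.vid D.hOne) s)
        (D.cast (D.hMul_assoc D.hOne c D.hOne) (D.hMul_assoc c D.hOne D.hOne)
          rfl rfl (D.hcomp s (D.vid D.hOne)))) hy s') (D.vcomp s s') :=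
    vcc_congr h1.symm (CEq.refl s') hy rfl
  exact hE2.symm.trans (hE3.trans ((braid_symm' C D.hOne c).trans
    (vid_congr (D.hOne_mul c))))

theorem braid_one_right (C : Cornering D) (c : D.H) :
    CEq (C.braid c D.hOne) (D.vid c) := by
  have h1 : CEq (D.vcomp (C.braid c D.hOne) (C.braid D.hOne c)) (C.braid c D.hOne) :=
    vcomp_vidr ((braid_one_left C c).trans (vid_congr (D.hOne_mul c).symm)) _
  have h2 : CEq (D.vcomp (C.braid c D.hOne) (C.braid D.hOne c)) (D.vid (D.hMul c D.hOne)) :=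
    braid_symm' C c D.hOne
  exact h1.symm.trans (h2.trans (vid_congr (D.hMul_one c)))

/- The second hexagon. -/

theorem hexagon2 (C : Cornering D) (c A B : D.H) :
    CEq (C.braid c (D.hMul A B))
      (vcc (D.hcomp (C.braid c A) (D.vid B)) ((D.hMul_assoc A c B).symm)
        (D.hcomp (D.vid A) (C.braid c B))) := by
  set X1 := D.hcomp (C.braid c A) (D.vid B) with hX1
  set X2 := D.hcomp (D.vid A) (C.braid c B) with hX2
  set X := vcc X1 ((D.hMul_assoc A c B).symm) X2 with hX
  set S := C.braid c (D.hMul A B) with hS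
  set S' := C.braid (D.hMul A B) c with hS'
  set A2 := D.hcomp (D.vid A) (C.braid B c) with hA2
  set Y2 := D.hcomp (C.braid A c) (D.vid B) with hY2
  -- S' ≈ A2 ; Y2
  have hhex : CEq S' (vcc A2 (D.hMul_assoc A c B) Y2) := by
    refine (hexagon' C A B c).trans ?_
    exact CEq.vcomp (CEq.refl A2) ((ceq_cast _ _ _ _ _).trans (ceq_cast _ _ _ _ _).symm)
  -- step (i): X ; S' ≈ vid
  have hXS' : CEq (vcc X (D.hMul_assoc A B c) S') (D.vid (D.hMul (D.hMul c A) B)) := by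
    have e1 : CEq (vcc X (D.hMul_assoc A B c) S')
        (vcc X1 ((D.hMul_assoc A c B).symm)
          (vcc X2 rfl (vcc A2 (D.hMul_assoc A c B) Y2))) := by
      refine (vcc_congr (CEq.refl X) hhex (D.hMul_assoc A B c) rfl).trans ?_
      exact vcc_assoc X1 _ X2 _ _
    have e2 : CEq (vcc X2 rfl (vcc A2 (D.hMul_assoc A c B) Y2))
        (vcc (D.vcomp X2 A2) (D.hMul_assoc A c B) Y2) :=
      (vcc_assoc X2 rfl A2 (D.hMul_assoc A c B) Y2).symm
    have e3 : CEq (D.vcomp X2 A2) (D.vid (D.hMul A (D.hMul c B))) := by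
      refine (ceq_of_eq (D.interchange (D.vid A) (C.braid c B) (D.vid A) (C.braid B c))).trans ?_
      exact (CEq.hcomp (vid_vcomp' _) (braid_symm' C c B)).trans (vid_mul' A (D.hMul c B))
    have e4 : CEq (vcc X2 rfl (vcc A2 (D.hMul_assoc A c B) Y2)) Y2 :=
      e2.trans (vcc_vidl e3 (D.hMul_assoc A c B) Y2)
    have e5 : CEq (vcc X (D.hMul_assoc A B c) S')
        (vcc X1 rfl Y2) :=
      e1.trans (vcc_congr (CEq.refl X1) e4 _ rfl)
    have e6 : CEq (vcc X1 rfl Y2) (D.vcomp X1 Y2) := CEq.refl _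
    have e7 : CEq (D.vcomp X1 Y2) (D.vid (D.hMul (D.hMul c A) B)) := by
      refine (ceq_of_eq (D.interchange (C.braid c A) (D.vid B) (C.braid A c) (D.vid B))).trans ?_
      exact (CEq.hcomp (braid_symm' C c A) (vcomp_vid' _)).trans (vid_mul' _ B)
    exact e5.trans (e6.trans e7)
  -- step (ii): S ≈ X
  have hS'S : CEq (D.vcomp S' S) (D.vid (D.hMul (D.hMul A B) c)) := braid_symm' C _ c
  have f1 : CEq X (vcc X (D.hMul_assoc A B c) (D.vcomp S' S)) :=
    (vcc_vidr X (D.hMul_assoc A B c) hS'S).symm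
  have f2 : CEq (vcc X (D.hMul_assoc A B c) (D.vcomp S' S))
      (vcc (vcc X (D.hMul_assoc A B c) S') rfl S) :=
    (vcc_assoc X (D.hMul_assoc A B c) S' rfl S).symm
  have f3 : CEq (vcc (vcc X (D.hMul_assoc A B c) S') rfl S) S :=
    vcc_vidl hXS' rfl S
  exact (f1.trans (f2.trans f3)).symm

end SODC
namespace SODC

variable {D : SODC}

theorem hiso_of_snakes (D : SODC) (C : Cornering D) (x y : D.H)
    (u : D.Cell D.hOne (D.hMul x y) D.vOne D.vOne)
    (e : D.Cell (D.hMul y x) D.hOne D.vOne D.vOne)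
    (hSx : CEq (D.vcomp (D.hcomp u (D.vid x))
        (D.cast (D.hMul_assoc x y x).symm rfl rfl rfl (D.hcomp (D.vid x) e)))
        (D.vid x))
    (hSy : CEq (D.vcomp (D.hcomp (D.vid y) u)
        (D.cast (D.hMul_assoc y x y) rfl rfl rfl (D.hcomp e (D.vid y))))
        (D.vid y)) :
    D.HIso (C.bullet x) (C.circ y) := by
  set bx := C.bullet x with hbx
  set cy := C.circ y with hcy
  set cr := C.crecv y with hcr
  set cs := C.csend y with hcs0
  set br := C.brecv x with hbr
  set bs := C.bsend x with hbs0
  set B := D.hcomp bs (D.vid y) with hB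
  set L2 := D.hcomp cr (D.vid x) with hL2
  set L3 := D.hcomp (D.vid x) cs with hL3
  set W2 := D.hcomp (D.vid y) br with hW2
  set T := D.cast rfl (D.hOne_mul y) (D.vOne_mul bx) (D.vOne_mul D.vOne)
      (D.vcomp u B) with hT
  set U := D.cast (D.hOne_mul x) rfl (D.vMul_one cy) (D.vMul_one D.vOne)
      (D.vcomp L2 e) with hU
  set T4 := D.cast rfl (D.hMul_one x) (D.vOne_mul D.vOne) (D.vOne_mul cy)
      (D.vcomp u L3) with hT4
  set U2 := D.cast (D.hMul_one y) rfl (D.vOne_mul D.vOne) (D.vMul_one bx)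
      (D.vcomp W2 e) with hU2
  set φ := D.cast rfl (D.hOne_mul D.hOne) (D.vOne_mul bx) (D.vOne_mul cy)
      (D.vcomp u (D.hcomp bs cs)) with hφ
  set ψ := D.cast (D.hOne_mul D.hOne) rfl (D.vMul_one cy) (D.vMul_one bx)
      (D.vcomp (D.hcomp cr br) e) with hψ
  refine ⟨φ, ψ, ?_, ?_⟩
  · -- Goal A : hcomp φ ψ ≈ hid (bullet x)
    have hPφ : CEq φ (D.vcomp T cs) := by
      have c1 : CEq (D.hcomp bs cs)
          (D.vcomp B (D.hcomp (D.vid D.hOne) cs)) := st1 bs cs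
      have c2 : CEq φ (D.vcomp u (D.vcomp B (D.hcomp (D.vid D.hOne) cs))) :=
        (ceq_cast _ _ _ _ _).trans (CEq.vcomp (CEq.refl u) c1)
      have c4 : CEq (D.vcomp (D.vcomp u B) (D.hcomp (D.vid D.hOne) cs))
          (D.vcomp T cs) :=
        CEq.vcomp (ceq_cast _ _ _ _ _).symm (hcomp_vidonel (CEq.refl _) cs)
      exact c2.trans ((vcomp_assoc' u B (D.hcomp (D.vid D.hOne) cs)).symm.trans c4)
    have hPψ : CEq ψ (D.vcomp br U) := by
      have d1 : CEq (D.hcomp cr br)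
          (D.vcomp (D.hcomp (D.vid D.hOne) br) L2) := st2 cr br
      have d2 : CEq ψ (D.vcomp (D.vcomp (D.hcomp (D.vid D.hOne) br) L2) e) :=
        (ceq_cast _ _ _ _ _).trans (CEq.vcomp d1 (CEq.refl e))
      have d4 : CEq (D.vcomp (D.hcomp (D.vid D.hOne) br) (D.vcomp L2 e))
          (D.vcomp br U) :=
        CEq.vcomp (hcomp_vidonel (CEq.refl _) br) (ceq_cast _ _ _ _ _).symm
      exact d2.trans ((vcomp_assoc' (D.hcomp (D.vid D.hOne) br) L2 e).trans d4)
    have hA3 : CEq (D.hcomp φ ψ) (D.vcomp (D.hcomp T br) (D.hcomp cs U)) :=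
      (CEq.hcomp hPφ hPψ).trans (ceq_of_eq (D.interchange T br cs U)).symm
    have hA5 : CEq (D.hcomp cs U) e := by
      have e0 : CEq (D.hcomp cs U)
          (D.hcomp (D.vcomp cs (D.hid D.vOne)) (D.vcomp L2 e)) :=
        CEq.hcomp (vcomp_vidr square_one'.symm cs).symm (ceq_cast _ _ _ _ _)
      have e2 : CEq (D.hcomp cs U)
          (D.vcomp (D.hcomp cs L2) (D.hcomp (D.hid D.vOne) e)) :=
        e0.trans (ceq_of_eq (D.interchange cs L2 (D.hid D.vOne) e)).symm
      have e3 : CEq (D.hcomp cs L2) (D.vid (D.hMul y x)) :=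
        (hcomp_assoc' cs cr (D.vid x)).symm.trans
          ((CEq.hcomp (yank_circ_h' C y) (CEq.refl (D.vid x))).trans (vid_mul' y x))
      exact e2.trans ((vcomp_vidl e3 _).trans (hid_hcomp' e))
    have hA6 : CEq (D.hcomp T br)
        (D.vcomp (D.hcomp u (D.hid D.vOne)) (D.hcomp B br)) := by
      have f0 : CEq (D.hcomp T br)
          (D.hcomp (D.vcomp u B) (D.vcomp (D.hid D.vOne) br)) :=
        CEq.hcomp (ceq_cast _ _ _ _ _) (vcomp_vidl square_one'.symm br).symm
      exact f0.trans (ceq_of_eq (D.interchange u (D.hid D.vOne) B br)).symm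
    have hYX : D.hMul y x = D.hMul (D.hMul D.hOne y) x := by rw [D.hOne_mul]
    have g0 : CEq (D.vcomp (D.hcomp T br) (D.hcomp cs U))
        (vcc (D.vcomp (D.hcomp u (D.hid D.vOne)) (D.hcomp B br)) hYX e) :=
      CEq.vcomp hA6 (hA5.trans (ceq_cast hYX rfl rfl rfl e).symm)
    have g1 : CEq (vcc (D.vcomp (D.hcomp u (D.hid D.vOne)) (D.hcomp B br)) hYX e)
        (vcc (D.hcomp u (D.hid D.vOne)) rfl (vcc (D.hcomp B br) hYX e)) :=
      vcc_assoc (D.hcomp u (D.hid D.vOne)) rfl (D.hcomp B br) hYX e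
    have g2 : CEq (vcc (D.hcomp B br) hYX e)
        (D.hcomp (D.vcomp bs (D.hid D.vOne)) (D.vcomp W2 e)) := by
      have h0 : CEq (D.hcomp B br) (D.hcomp bs W2) := hcomp_assoc' bs (D.vid y) br
      have h1 : CEq (D.cast hYX rfl rfl rfl e) (D.hcomp (D.hid D.vOne) e) :=
        (ceq_cast _ _ _ _ _).trans (hid_hcomp' e).symm
      exact (CEq.vcomp h0 h1).trans
        (ceq_of_eq (D.interchange bs W2 (D.hid D.vOne) e))
    have g3 : CEq (D.hcomp (D.vcomp bs (D.hid D.vOne)) (D.vcomp W2 e))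
        (D.vcomp (D.hcomp (D.vid x) W2) (D.hcomp bs e)) := by
      have i0 : CEq (D.vcomp bs (D.hid D.vOne)) (D.vcomp (D.vid x) bs) :=
        (vcomp_vidr square_one'.symm bs).trans (vcomp_vidl (CEq.refl (D.vid x)) bs).symm
      exact (CEq.hcomp i0 (CEq.refl (D.vcomp W2 e))).trans
        (ceq_of_eq (D.interchange (D.vid x) W2 bs e)).symm
    have g4 : CEq (D.hcomp (D.vid x) W2) (D.hcomp (D.vid (D.hMul x y)) br) :=
      (hcomp_assoc' (D.vid x) (D.vid y) br).symm.trans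
        (CEq.hcomp (vid_mul' x y) (CEq.refl br))
    have h9 : D.hMul x (D.hMul y x) = D.hMul (D.hMul x y) x := (D.hMul_assoc x y x).symm
    have g5 : CEq (D.vcomp (D.hcomp (D.vid x) W2) (D.hcomp bs e))
        (vcc (D.hcomp (D.vid (D.hMul x y)) br) h9 (D.hcomp bs e)) :=
      CEq.vcomp g4 (ceq_cast h9 rfl rfl rfl (D.hcomp bs e)).symm
    have g6 : CEq (vcc (D.hcomp u (D.hid D.vOne)) rfl (vcc (D.hcomp B br) hYX e))
        (vcc (D.hcomp u (D.hid D.vOne)) rfl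
          (vcc (D.hcomp (D.vid (D.hMul x y)) br) h9 (D.hcomp bs e))) :=
      vcc_congr (CEq.refl _) (g2.trans (g3.trans g5)) rfl rfl
    have g7 : CEq (vcc (D.hcomp u (D.hid D.vOne)) rfl
          (vcc (D.hcomp (D.vid (D.hMul x y)) br) h9 (D.hcomp bs e)))
        (vcc (vcc (D.hcomp u (D.hid D.vOne)) rfl (D.hcomp (D.vid (D.hMul x y)) br))
          h9 (D.hcomp bs e)) :=
      (vcc_assoc (D.hcomp u (D.hid D.vOne)) rfl
        (D.hcomp (D.vid (D.hMul x y)) br) h9 (D.hcomp bs e)).symm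
    have g8 : CEq (vcc (D.hcomp u (D.hid D.vOne)) rfl (D.hcomp (D.vid (D.hMul x y)) br))
        (D.hcomp u br) :=
      (ceq_of_eq (D.interchange u (D.hid D.vOne) (D.vid (D.hMul x y)) br)).trans
        (CEq.hcomp (vcomp_vidr (CEq.refl _) u) (vcomp_vidl square_one'.symm br))
    have g9 : CEq (vcc (vcc (D.hcomp u (D.hid D.vOne)) rfl
          (D.hcomp (D.vid (D.hMul x y)) br)) h9 (D.hcomp bs e))
        (vcc (D.hcomp u br) h9 (D.hcomp bs e)) :=
      vcc_congr g8 (CEq.refl _) h9 h9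
    have g10a : CEq (D.hcomp u br)
        (D.vcomp (D.hcomp (D.vid D.hOne) br) (D.hcomp u (D.vid x))) := st2 u br
    have g10b : CEq (D.hcomp bs e)
        (D.vcomp (D.hcomp (D.vid x) e) (D.hcomp bs (D.vid D.hOne))) := st2 bs e
    have g11 : CEq (vcc (D.hcomp u br) h9 (D.hcomp bs e))
        (vcc (D.vcomp (D.hcomp (D.vid D.hOne) br) (D.hcomp u (D.vid x))) h9
          (D.vcomp (D.hcomp (D.vid x) e) (D.hcomp bs (D.vid D.hOne)))) :=
      vcc_congr g10a g10b h9 h9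
    have g12 : CEq (vcc (D.vcomp (D.hcomp (D.vid D.hOne) br) (D.hcomp u (D.vid x))) h9
          (D.vcomp (D.hcomp (D.vid x) e) (D.hcomp bs (D.vid D.hOne))))
        (vcc (D.hcomp (D.vid D.hOne) br) rfl
          (vcc (vcc (D.hcomp u (D.vid x)) h9 (D.hcomp (D.vid x) e)) rfl
            (D.hcomp bs (D.vid D.hOne)))) := by
      refine (vcc_assoc (D.hcomp (D.vid D.hOne) br) rfl (D.hcomp u (D.vid x)) h9
        (D.vcomp (D.hcomp (D.vid x) e) (D.hcomp bs (D.vid D.hOne)))).trans ?_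
      exact vcc_congr (CEq.refl _)
        ((vcc_assoc (D.hcomp u (D.vid x)) h9 (D.hcomp (D.vid x) e) rfl
          (D.hcomp bs (D.vid D.hOne))).symm) rfl rfl
    have g13 : CEq (vcc (vcc (D.hcomp u (D.vid x)) h9 (D.hcomp (D.vid x) e)) rfl
          (D.hcomp bs (D.vid D.hOne))) bs :=
      (vcc_vidl hSx rfl _).trans (hcomp_vidoner (CEq.refl _) bs)
    have hOX : x = D.hMul D.hOne x := (D.hOne_mul x).symm
    have g14 : CEq (vcc (D.hcomp (D.vid D.hOne) br) rfl
          (vcc (vcc (D.hcomp u (D.vid x)) h9 (D.hcomp (D.vid x) e)) rfl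
            (D.hcomp bs (D.vid D.hOne))))
        (vcc br rfl bs) := by
      refine (vcc_congr (CEq.refl (D.hcomp (D.vid D.hOne) br)) g13 rfl hOX).trans ?_
      exact vcc_congr (hcomp_vidonel (CEq.refl _) br) (CEq.refl bs) hOX rfl
    have final : CEq (D.hcomp φ ψ) (D.hid bx) :=
      hA3.trans (g0.trans (g1.trans (g6.trans (g7.trans (g9.trans (g11.trans
        (g12.trans (g14.trans (yank_bullet_v' C x)))))))))
    exact final.heq
  · -- Goal B : hcomp ψ φ ≈ hid (circ y)
    have hPψ2 : CEq ψ (D.vcomp cr U2) := by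
      have p1 : CEq (D.hcomp cr br)
          (D.vcomp (D.hcomp cr (D.vid D.hOne)) W2) := st1 cr br
      have p2 : CEq ψ (D.vcomp (D.vcomp (D.hcomp cr (D.vid D.hOne)) W2) e) :=
        (ceq_cast _ _ _ _ _).trans (CEq.vcomp p1 (CEq.refl e))
      have p4 : CEq (D.vcomp (D.hcomp cr (D.vid D.hOne)) (D.vcomp W2 e))
          (D.vcomp cr U2) :=
        CEq.vcomp (hcomp_vidoner (CEq.refl _) cr) (ceq_cast _ _ _ _ _).symm
      exact p2.trans ((vcomp_assoc' (D.hcomp cr (D.vid D.hOne)) W2 e).trans p4)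
    have hPφ2 : CEq φ (D.vcomp T4 bs) := by
      have q1 : CEq (D.hcomp bs cs)
          (D.vcomp L3 (D.hcomp bs (D.vid D.hOne))) := st2 bs cs
      have q2 : CEq φ (D.vcomp u (D.vcomp L3 (D.hcomp bs (D.vid D.hOne)))) :=
        (ceq_cast _ _ _ _ _).trans (CEq.vcomp (CEq.refl u) q1)
      have q4 : CEq (D.vcomp (D.vcomp u L3) (D.hcomp bs (D.vid D.hOne)))
          (D.vcomp T4 bs) :=
        CEq.vcomp (ceq_cast _ _ _ _ _).symm (hcomp_vidoner (CEq.refl _) bs)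
      exact q2.trans ((vcomp_assoc' u L3 (D.hcomp bs (D.vid D.hOne))).symm.trans q4)
    have hB3 : CEq (D.hcomp ψ φ) (D.vcomp (D.hcomp cr T4) (D.hcomp U2 bs)) :=
      (CEq.hcomp hPψ2 hPφ2).trans (ceq_of_eq (D.interchange cr T4 U2 bs)).symm
    have hB5 : CEq (D.hcomp U2 bs) e := by
      have r0 : CEq (D.hcomp U2 bs)
          (D.hcomp (D.vcomp W2 e) (D.vcomp bs (D.hid D.vOne))) :=
        CEq.hcomp (ceq_cast _ _ _ _ _) (vcomp_vidr square_one'.symm bs).symm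
      have r2 : CEq (D.hcomp U2 bs)
          (D.vcomp (D.hcomp W2 bs) (D.hcomp e (D.hid D.vOne))) :=
        r0.trans (ceq_of_eq (D.interchange W2 bs e (D.hid D.vOne))).symm
      have r3 : CEq (D.hcomp W2 bs) (D.vid (D.hMul y x)) :=
        (hcomp_assoc' (D.vid y) br bs).trans
          ((CEq.hcomp (CEq.refl (D.vid y)) (yank_bullet_h' C x)).trans (vid_mul' y x))
      exact r2.trans ((vcomp_vidl r3 _).trans (hcomp_hid' e))
    have hB6 : CEq (D.hcomp cr T4)
        (D.vcomp (D.hcomp (D.hid D.vOne) u) (D.hcomp cr L3)) := by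
      have f0 : CEq (D.hcomp cr T4)
          (D.hcomp (D.vcomp (D.hid D.vOne) cr) (D.vcomp u L3)) :=
        CEq.hcomp (vcomp_vidl square_one'.symm cr).symm (ceq_cast _ _ _ _ _)
      exact f0.trans (ceq_of_eq (D.interchange (D.hid D.vOne) u cr L3)).symm
    have hYX2 : D.hMul y x = D.hMul y (D.hMul x D.hOne) := by rw [D.hMul_one]
    have s0 : CEq (D.vcomp (D.hcomp cr T4) (D.hcomp U2 bs))
        (vcc (D.vcomp (D.hcomp (D.hid D.vOne) u) (D.hcomp cr L3)) hYX2 e) :=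
      CEq.vcomp hB6 (hB5.trans (ceq_cast hYX2 rfl rfl rfl e).symm)
    have s1 : CEq (vcc (D.vcomp (D.hcomp (D.hid D.vOne) u) (D.hcomp cr L3)) hYX2 e)
        (vcc (D.hcomp (D.hid D.vOne) u) rfl (vcc (D.hcomp cr L3) hYX2 e)) :=
      vcc_assoc (D.hcomp (D.hid D.vOne) u) rfl (D.hcomp cr L3) hYX2 e
    have s2 : CEq (vcc (D.hcomp cr L3) hYX2 e)
        (D.hcomp (D.vcomp L2 e) (D.vcomp cs (D.hid D.vOne))) := by
      have h0' : CEq (D.hcomp cr L3) (D.hcomp L2 cs) :=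
        (hcomp_assoc' cr (D.vid x) cs).symm
      have h1' : CEq (D.cast hYX2 rfl rfl rfl e) (D.hcomp e (D.hid D.vOne)) :=
        (ceq_cast _ _ _ _ _).trans (hcomp_hid' e).symm
      exact (CEq.vcomp h0' h1').trans
        (ceq_of_eq (D.interchange L2 cs e (D.hid D.vOne)))
    have s3 : CEq (D.hcomp (D.vcomp L2 e) (D.vcomp cs (D.hid D.vOne)))
        (D.vcomp (D.hcomp L2 (D.vid y)) (D.hcomp e cs)) := by
      have i0' : CEq (D.vcomp cs (D.hid D.vOne)) (D.vcomp (D.vid y) cs) :=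
        (vcomp_vidr square_one'.symm cs).trans (vcomp_vidl (CEq.refl (D.vid y)) cs).symm
      exact (CEq.hcomp (CEq.refl (D.vcomp L2 e)) i0').trans
        (ceq_of_eq (D.interchange L2 (D.vid y) e cs)).symm
    have s4 : CEq (D.hcomp L2 (D.vid y)) (D.hcomp cr (D.vid (D.hMul x y))) :=
      (hcomp_assoc' cr (D.vid x) (D.vid y)).trans
        (CEq.hcomp (CEq.refl cr) (vid_mul' x y))
    have h9' : D.hMul (D.hMul y x) y = D.hMul y (D.hMul x y) := D.hMul_assoc y x y
    have s5 : CEq (D.vcomp (D.hcomp L2 (D.vid y)) (D.hcomp e cs))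
        (vcc (D.hcomp cr (D.vid (D.hMul x y))) h9' (D.hcomp e cs)) :=
      CEq.vcomp s4 (ceq_cast h9' rfl rfl rfl (D.hcomp e cs)).symm
    have s6 : CEq (vcc (D.hcomp (D.hid D.vOne) u) rfl (vcc (D.hcomp cr L3) hYX2 e))
        (vcc (D.hcomp (D.hid D.vOne) u) rfl
          (vcc (D.hcomp cr (D.vid (D.hMul x y))) h9' (D.hcomp e cs))) :=
      vcc_congr (CEq.refl _) (s2.trans (s3.trans s5)) rfl rfl
    have s7 : CEq (vcc (D.hcomp (D.hid D.vOne) u) rfl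
          (vcc (D.hcomp cr (D.vid (D.hMul x y))) h9' (D.hcomp e cs)))
        (vcc (vcc (D.hcomp (D.hid D.vOne) u) rfl (D.hcomp cr (D.vid (D.hMul x y))))
          h9' (D.hcomp e cs)) :=
      (vcc_assoc (D.hcomp (D.hid D.vOne) u) rfl
        (D.hcomp cr (D.vid (D.hMul x y))) h9' (D.hcomp e cs)).symm
    have s8 : CEq (vcc (D.hcomp (D.hid D.vOne) u) rfl (D.hcomp cr (D.vid (D.hMul x y))))
        (D.hcomp cr u) :=
      (ceq_of_eq (D.interchange (D.hid D.vOne) u cr (D.vid (D.hMul x y)))).trans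
        (CEq.hcomp (vcomp_vidl square_one'.symm cr) (vcomp_vidr (CEq.refl _) u))
    have s9 : CEq (vcc (vcc (D.hcomp (D.hid D.vOne) u) rfl
          (D.hcomp cr (D.vid (D.hMul x y)))) h9' (D.hcomp e cs))
        (vcc (D.hcomp cr u) h9' (D.hcomp e cs)) :=
      vcc_congr s8 (CEq.refl _) h9' h9'
    have s10a : CEq (D.hcomp cr u)
        (D.vcomp (D.hcomp cr (D.vid D.hOne)) (D.hcomp (D.vid y) u)) := st1 cr u
    have s10b : CEq (D.hcomp e cs)
        (D.vcomp (D.hcomp e (D.vid y)) (D.hcomp (D.vid D.hOne) cs)) := st1 e cs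
    have s11 : CEq (vcc (D.hcomp cr u) h9' (D.hcomp e cs))
        (vcc (D.vcomp (D.hcomp cr (D.vid D.hOne)) (D.hcomp (D.vid y) u)) h9'
          (D.vcomp (D.hcomp e (D.vid y)) (D.hcomp (D.vid D.hOne) cs))) :=
      vcc_congr s10a s10b h9' h9'
    have s12 : CEq (vcc (D.vcomp (D.hcomp cr (D.vid D.hOne)) (D.hcomp (D.vid y) u)) h9'
          (D.vcomp (D.hcomp e (D.vid y)) (D.hcomp (D.vid D.hOne) cs)))
        (vcc (D.hcomp cr (D.vid D.hOne)) rfl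
          (vcc (vcc (D.hcomp (D.vid y) u) h9' (D.hcomp e (D.vid y))) rfl
            (D.hcomp (D.vid D.hOne) cs))) := by
      refine (vcc_assoc (D.hcomp cr (D.vid D.hOne)) rfl (D.hcomp (D.vid y) u) h9'
        (D.vcomp (D.hcomp e (D.vid y)) (D.hcomp (D.vid D.hOne) cs))).trans ?_
      exact vcc_congr (CEq.refl _)
        ((vcc_assoc (D.hcomp (D.vid y) u) h9' (D.hcomp e (D.vid y)) rfl
          (D.hcomp (D.vid D.hOne) cs)).symm) rfl rfl
    have s13 : CEq (vcc (vcc (D.hcomp (D.vid y) u) h9' (D.hcomp e (D.vid y))) rfl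
          (D.hcomp (D.vid D.hOne) cs)) cs :=
      (vcc_vidl hSy rfl _).trans (hcomp_vidonel (CEq.refl _) cs)
    have hOY : y = D.hMul y D.hOne := (D.hMul_one y).symm
    have s14 : CEq (vcc (D.hcomp cr (D.vid D.hOne)) rfl
          (vcc (vcc (D.hcomp (D.vid y) u) h9' (D.hcomp e (D.vid y))) rfl
            (D.hcomp (D.vid D.hOne) cs)))
        (vcc cr rfl cs) := by
      refine (vcc_congr (CEq.refl (D.hcomp cr (D.vid D.hOne))) s13 rfl hOY).trans ?_
      exact vcc_congr (hcomp_vidoner (CEq.refl _) cr) (CEq.refl cs) hOY rfl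
    have final : CEq (D.hcomp ψ φ) (D.hid cy) :=
      hB3.trans (s0.trans (s1.trans (s6.trans (s7.trans (s9.trans (s11.trans
        (s12.trans (s14.trans (yank_circ_v' C y)))))))))
    exact final.heq

end SODC
namespace SODC

variable {D : SODC}

/-- S2' : the braided snake identity on the `a` side. -/
theorem braided_snake_y (C : Cornering D) (K : CompactStructure D) (a : D.H) :
    CEq (D.vcomp
        (D.hcomp (D.vid a)
          (D.cast rfl rfl (D.vOne_mul D.vOne) (D.vOne_mul D.vOne)
            (D.vcomp (K.eta a) (C.braid a (K.dual a)))))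
        (D.cast (D.hMul_assoc a (K.dual a) a) rfl rfl rfl
          (D.hcomp
            (D.cast rfl rfl (D.vOne_mul D.vOne) (D.vOne_mul D.vOne)
              (D.vcomp (C.braid a (K.dual a)) (K.eps a)))
            (D.vid a))))
      (D.vid a) := by
  set b := K.dual a with hb
  set σ := C.braid a b with hσ
  set σ' := C.braid b a with hσ'
  set η := K.eta a with hη
  set ε := K.eps a with hε
  set u := D.cast rfl rfl (D.vOne_mul D.vOne) (D.vOne_mul D.vOne) (D.vcomp η σ) with hu
  set e := D.cast rfl rfl (D.vOne_mul D.vOne) (D.vOne_mul D.vOne) (D.vcomp σ ε) with he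
  set P1 := D.hcomp (D.vid a) η with hP1
  set P2 := D.hcomp (D.vid a) σ with hP2
  set Q1 := D.hcomp σ (D.vid a) with hQ1
  set Q2 := D.hcomp ε (D.vid a) with hQ2
  set R1 := D.hcomp η (D.vid a) with hR1
  set S1 := C.braid (D.hMul a b) a with hS1
  set S2 := C.braid (D.hMul b a) a with hS2
  set M1 := D.hcomp (D.vid b) (C.braid a a) with hM1
  set P3 := D.hcomp (D.vid a) ε with hP3
  have HA : D.hMul (D.hMul a b) a = D.hMul a (D.hMul b a) := D.hMul_assoc a b a
  have s0 : CEq (D.hcomp (D.vid a) u) (D.vcomp P1 P2) :=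
    (CEq.hcomp (vid_vcomp' (D.vid a)).symm (ceq_cast _ _ _ _ _)).trans
      (ceq_of_eq (D.interchange (D.vid a) η (D.vid a) σ)).symm
  have s1 : CEq (D.hcomp e (D.vid a)) (D.vcomp Q1 Q2) :=
    (CEq.hcomp (ceq_cast _ _ _ _ _) (vid_vcomp' (D.vid a)).symm).trans
      (ceq_of_eq (D.interchange σ (D.vid a) ε (D.vid a))).symm
  have s2 : CEq (vcc (D.hcomp (D.vid a) u) HA (D.hcomp e (D.vid a)))
      (vcc (D.vcomp P1 P2) HA (D.vcomp Q1 Q2)) := vcc_congr s0 s1 HA HA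
  have s3 : CEq (vcc (D.vcomp P1 P2) HA (D.vcomp Q1 Q2))
      (vcc P1 rfl (vcc P2 HA (vcc Q1 rfl Q2))) :=
    vcc_assoc P1 rfl P2 HA (vcc Q1 rfl Q2)
  have nat1 := C.braid_natural η (D.vid a)
  have m1 : CEq P1 (D.vcomp R1 S1) :=
    (vcomp_vidl (braid_one_left C a) P1).symm.trans (ceq_of_eq nat1).symm
  have s4 : CEq (vcc P1 rfl (vcc P2 HA (vcc Q1 rfl Q2)))
      (vcc (D.vcomp R1 S1) rfl (vcc P2 HA (vcc Q1 rfl Q2))) :=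
    vcc_congr m1 (CEq.refl _) rfl rfl
  have s5 : CEq (vcc (D.vcomp R1 S1) rfl (vcc P2 HA (vcc Q1 rfl Q2)))
      (vcc R1 rfl (vcc S1 rfl (vcc P2 HA (vcc Q1 rfl Q2)))) :=
    vcc_assoc R1 rfl S1 rfl _
  have nat2 := C.braid_natural σ (D.vid a)
  have s6 : CEq (vcc S1 rfl (vcc P2 HA (vcc Q1 rfl Q2)))
      (vcc Q1 rfl (vcc S2 HA (vcc Q1 rfl Q2))) :=
    (vcc_assoc S1 rfl P2 HA (vcc Q1 rfl Q2)).symm.trans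
      ((vcc_congr (ceq_of_eq nat2).symm (CEq.refl (vcc Q1 rfl Q2)) HA HA).trans
        (vcc_assoc Q1 rfl S2 HA (vcc Q1 rfl Q2)))
  have s7 : CEq (vcc R1 rfl (vcc S1 rfl (vcc P2 HA (vcc Q1 rfl Q2))))
      (vcc R1 rfl (vcc Q1 rfl (vcc S2 HA (vcc Q1 rfl Q2)))) :=
    vcc_congr (CEq.refl R1) s6 rfl rfl
  have s8 : CEq (vcc R1 rfl (vcc Q1 rfl (vcc S2 HA (vcc Q1 rfl Q2))))
      (vcc (D.vcomp R1 Q1) rfl (vcc S2 HA (vcc Q1 rfl Q2))) :=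
    (vcc_assoc R1 rfl Q1 rfl _).symm
  have r' : CEq (D.vcomp R1 Q1)
      (D.hcomp (D.vcomp η σ) (D.vcomp (D.vid a) (D.vid a))) :=
    ceq_of_eq (D.interchange η (D.vid a) σ (D.vid a))
  have s10 : CEq (vcc (D.vcomp R1 Q1) rfl (vcc S2 HA (vcc Q1 rfl Q2)))
      (vcc (D.hcomp (D.vcomp η σ) (D.vcomp (D.vid a) (D.vid a))) rfl
        (vcc S2 HA (vcc Q1 rfl Q2))) :=
    vcc_congr r' (CEq.refl _) rfl rfl
  -- reduce S2 ; Q1 via the hexagon and symmetry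
  have hexB : CEq S2 (D.vcomp M1
      (D.cast (D.hMul_assoc b a a) (D.hMul_assoc a b a) rfl rfl
        (D.hcomp σ' (D.vid a)))) := hexagon' C b a a
  have zz0 : CEq (vcc (D.cast (D.hMul_assoc b a a) (D.hMul_assoc a b a) rfl rfl
        (D.hcomp σ' (D.vid a))) HA Q1) (D.vid (D.hMul (D.hMul b a) a)) := by
    refine (vcc_congr (ceq_cast _ _ _ _ _) (CEq.refl Q1) HA rfl).trans ?_
    refine (ceq_of_eq (D.interchange σ' (D.vid a) σ (D.vid a))).trans ?_
    exact (CEq.hcomp (braid_symm' C b a) (vid_vcomp' (D.vid a))).trans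
      (vid_mul' (D.hMul b a) a)
  have zz1 : CEq (vcc S2 HA Q1) M1 :=
    (vcc_congr hexB (CEq.refl Q1) HA HA).trans
      ((vcc_assoc M1 rfl _ HA Q1).trans (vcc_vidr M1 rfl zz0))
  have hba : D.hMul (D.hMul b a) a = D.hMul b (D.hMul a a) := D.hMul_assoc b a a
  have s11 : CEq (vcc S2 HA (vcc Q1 rfl Q2)) (vcc M1 hba Q2) :=
    (vcc_assoc S2 HA Q1 rfl Q2).symm.trans (vcc_congr zz1 (CEq.refl Q2) rfl hba)
  have nat3 := C.braid_natural ε (D.vid a)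
  have m4 : CEq Q2 (D.vcomp S2 P3) :=
    (vcomp_vidr (braid_one_left C a) Q2).symm.trans (ceq_of_eq nat3)
  have s12 : CEq (vcc M1 hba Q2) (vcc M1 hba (D.vcomp S2 P3)) :=
    vcc_congr (CEq.refl M1) m4 hba hba
  have s13 : CEq (vcc M1 hba (D.vcomp S2 P3)) (vcc (vcc M1 hba S2) rfl P3) :=
    (vcc_assoc M1 hba S2 rfl P3).symm
  have mm1 : CEq (D.vcomp M1 M1) (D.vid (D.hMul b (D.hMul a a))) :=
    (ceq_of_eq (D.interchange (D.vid b) (C.braid a a) (D.vid b) (C.braid a a))).trans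
      ((CEq.hcomp (vid_vcomp' (D.vid b)) (braid_symm' C a a)).trans
        (vid_mul' b (D.hMul a a)))
  have m5 : CEq (vcc M1 hba S2) (D.hcomp σ' (D.vid a)) := by
    refine (vcc_congr (CEq.refl M1) hexB hba rfl).trans ?_
    refine ((vcc_assoc M1 rfl M1 rfl _).symm).trans ?_
    exact (vcc_vidl mm1 rfl _).trans
      (ceq_cast (D.hMul_assoc b a a) (D.hMul_assoc a b a) rfl rfl
        (D.hcomp σ' (D.vid a)))
  have s14 : CEq (vcc (vcc M1 hba S2) rfl P3)
      (vcc (D.hcomp σ' (D.vid a)) HA.symm P3) :=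
    vcc_congr m5 (CEq.refl P3) rfl HA.symm
  -- assemble the reduction of the tail
  have tail : CEq (vcc S2 HA (vcc Q1 rfl Q2))
      (vcc (D.hcomp σ' (D.vid a)) HA.symm P3) :=
    s11.trans (s12.trans (s13.trans s14))
  have s15 : CEq (vcc (D.hcomp (D.vcomp η σ) (D.vcomp (D.vid a) (D.vid a))) rfl
        (vcc S2 HA (vcc Q1 rfl Q2)))
      (vcc (D.hcomp (D.vcomp η σ) (D.vcomp (D.vid a) (D.vid a))) rfl
        (vcc (D.hcomp σ' (D.vid a)) HA.symm P3)) :=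
    vcc_congr (CEq.refl _) tail rfl rfl
  have s16 : CEq (vcc (D.hcomp (D.vcomp η σ) (D.vcomp (D.vid a) (D.vid a))) rfl
        (vcc (D.hcomp σ' (D.vid a)) HA.symm P3))
      (vcc (D.vcomp (D.hcomp (D.vcomp η σ) (D.vcomp (D.vid a) (D.vid a)))
        (D.hcomp σ' (D.vid a))) HA.symm P3) :=
    (vcc_assoc _ rfl (D.hcomp σ' (D.vid a)) HA.symm P3).symm
  have inner1 : CEq (D.vcomp (D.vcomp η σ) σ') η :=
    (vcomp_assoc' η σ σ').trans (vcomp_vidr (braid_symm' C a b) η)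
  have inner2 : CEq (D.vcomp (D.vcomp (D.vid a) (D.vid a)) (D.vid a)) (D.vid a) :=
    (vcomp_vid' (D.vcomp (D.vid a) (D.vid a))).trans (vcomp_vid' (D.vid a))
  have rr : CEq (D.vcomp (D.hcomp (D.vcomp η σ) (D.vcomp (D.vid a) (D.vid a)))
      (D.hcomp σ' (D.vid a))) R1 :=
    (ceq_of_eq (D.interchange (D.vcomp η σ) (D.vcomp (D.vid a) (D.vid a))
      σ' (D.vid a))).trans (CEq.hcomp inner1 inner2)
  have s18 : CEq (vcc (D.vcomp (D.hcomp (D.vcomp η σ) (D.vcomp (D.vid a) (D.vid a)))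
        (D.hcomp σ' (D.vid a))) HA.symm P3)
      (vcc R1 HA.symm P3) :=
    vcc_congr rr (CEq.refl P3) HA.symm HA.symm
  have snake1' : CEq (vcc R1 HA.symm P3) (D.vid a) :=
    ⟨D.hOne_mul a, D.hMul_one a, D.vOne_mul _, D.vOne_mul _, K.snake₁ a⟩
  exact s2.trans (s3.trans (s4.trans (s5.trans (s7.trans (s8.trans (s10.trans
    (s15.trans (s16.trans (s18.trans snake1')))))))))

/-- S1' : the braided snake identity on the `a*` side. -/
theorem braided_snake_x (C : Cornering D) (K : CompactStructure D) (a : D.H) :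
    CEq (D.vcomp
        (D.hcomp
          (D.cast rfl rfl (D.vOne_mul D.vOne) (D.vOne_mul D.vOne)
            (D.vcomp (K.eta a) (C.braid a (K.dual a))))
          (D.vid (K.dual a)))
        (D.cast (D.hMul_assoc (K.dual a) a (K.dual a)).symm rfl rfl rfl
          (D.hcomp (D.vid (K.dual a))
            (D.cast rfl rfl (D.vOne_mul D.vOne) (D.vOne_mul D.vOne)
              (D.vcomp (C.braid a (K.dual a)) (K.eps a))))))
      (D.vid (K.dual a)) := by
  set b := K.dual a with hb
  set σ := C.braid a b with hσ
  set σ' := C.braid b a with hσ'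
  set η := K.eta a with hη
  set ε := K.eps a with hε
  set u := D.cast rfl rfl (D.vOne_mul D.vOne) (D.vOne_mul D.vOne) (D.vcomp η σ) with hu
  set e := D.cast rfl rfl (D.vOne_mul D.vOne) (D.vOne_mul D.vOne) (D.vcomp σ ε) with he
  set Rb := D.hcomp η (D.vid b) with hRb
  set Qb := D.hcomp σ (D.vid b) with hQb
  set Pb := D.hcomp (D.vid b) σ with hPb
  set P'b := D.hcomp (D.vid b) ε with hP'b
  set N1 := D.hcomp (D.vid b) η with hN1
  set S3 := C.braid b (D.hMul a b) with hS3
  set S4 := C.braid b (D.hMul b a) with hS4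
  set Mb := D.hcomp (C.braid b b) (D.vid a) with hMb
  have HB : D.hMul b (D.hMul a b) = D.hMul (D.hMul b a) b := (D.hMul_assoc b a b).symm
  have t0 : CEq (D.hcomp u (D.vid b)) (D.vcomp Rb Qb) :=
    (CEq.hcomp (ceq_cast _ _ _ _ _) (vid_vcomp' (D.vid b)).symm).trans
      (ceq_of_eq (D.interchange η (D.vid b) σ (D.vid b))).symm
  have t1 : CEq (D.hcomp (D.vid b) e) (D.vcomp Pb P'b) :=
    (CEq.hcomp (vid_vcomp' (D.vid b)).symm (ceq_cast _ _ _ _ _)).trans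
      (ceq_of_eq (D.interchange (D.vid b) σ (D.vid b) ε)).symm
  have t2 : CEq (vcc (D.hcomp u (D.vid b)) HB (D.hcomp (D.vid b) e))
      (vcc (D.vcomp Rb Qb) HB (D.vcomp Pb P'b)) := vcc_congr t0 t1 HB HB
  have t3 : CEq (vcc (D.vcomp Rb Qb) HB (D.vcomp Pb P'b))
      (vcc Rb rfl (vcc Qb HB (vcc Pb rfl P'b))) :=
    vcc_assoc Rb rfl Qb HB (vcc Pb rfl P'b)
  have nat1 := C.braid_natural (D.vid b) η
  have m1 : CEq Rb (D.vcomp N1 S3) :=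
    (vcomp_vidl (braid_one_right C b) Rb).symm.trans (ceq_of_eq nat1).symm
  have t4 : CEq (vcc Rb rfl (vcc Qb HB (vcc Pb rfl P'b)))
      (vcc (D.vcomp N1 S3) rfl (vcc Qb HB (vcc Pb rfl P'b))) :=
    vcc_congr m1 (CEq.refl _) rfl rfl
  have t5 : CEq (vcc (D.vcomp N1 S3) rfl (vcc Qb HB (vcc Pb rfl P'b)))
      (vcc N1 rfl (vcc S3 rfl (vcc Qb HB (vcc Pb rfl P'b)))) :=
    vcc_assoc N1 rfl S3 rfl _
  have nat2 := C.braid_natural (D.vid b) σ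
  have t6 : CEq (vcc S3 rfl (vcc Qb HB (vcc Pb rfl P'b)))
      (vcc Pb rfl (vcc S4 HB (vcc Pb rfl P'b))) :=
    (vcc_assoc S3 rfl Qb HB (vcc Pb rfl P'b)).symm.trans
      ((vcc_congr (ceq_of_eq nat2).symm (CEq.refl (vcc Pb rfl P'b)) HB HB).trans
        (vcc_assoc Pb rfl S4 HB (vcc Pb rfl P'b)))
  have t7 : CEq (vcc N1 rfl (vcc S3 rfl (vcc Qb HB (vcc Pb rfl P'b))))
      (vcc N1 rfl (vcc Pb rfl (vcc S4 HB (vcc Pb rfl P'b)))) :=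
    vcc_congr (CEq.refl N1) t6 rfl rfl
  have t8 : CEq (vcc N1 rfl (vcc Pb rfl (vcc S4 HB (vcc Pb rfl P'b))))
      (vcc (D.vcomp N1 Pb) rfl (vcc S4 HB (vcc Pb rfl P'b))) :=
    (vcc_assoc N1 rfl Pb rfl _).symm
  have t9 : CEq (D.vcomp N1 Pb)
      (D.hcomp (D.vcomp (D.vid b) (D.vid b)) (D.vcomp η σ)) :=
    ceq_of_eq (D.interchange (D.vid b) η (D.vid b) σ)
  have t10 : CEq (vcc (D.vcomp N1 Pb) rfl (vcc S4 HB (vcc Pb rfl P'b)))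
      (vcc (D.hcomp (D.vcomp (D.vid b) (D.vid b)) (D.vcomp η σ)) rfl
        (vcc S4 HB (vcc Pb rfl P'b))) :=
    vcc_congr t9 (CEq.refl _) rfl rfl
  -- reduce S4 ; Pb via the second hexagon and symmetry
  have hbba : D.hMul b (D.hMul b a) = D.hMul (D.hMul b b) a := (D.hMul_assoc b b a).symm
  have hex2b : CEq S4 (vcc Mb hbba (D.hcomp (D.vid b) σ')) := hexagon2 C b b a
  have inn0 : CEq (D.vcomp (D.hcomp (D.vid b) σ') Pb) (D.vid (D.hMul b (D.hMul b a))) :=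
    (ceq_of_eq (D.interchange (D.vid b) σ' (D.vid b) σ)).trans
      ((CEq.hcomp (vid_vcomp' (D.vid b)) (braid_symm' C b a)).trans
        (vid_mul' b (D.hMul b a)))
  have zw2 : CEq (vcc (D.hcomp (D.vid b) σ') rfl (vcc Pb rfl P'b)) P'b :=
    ((vcc_assoc (D.hcomp (D.vid b) σ') rfl Pb rfl P'b).symm).trans
      (vcc_vidl inn0 rfl P'b)
  have zw1 : CEq (vcc S4 HB (vcc Pb rfl P'b)) (vcc Mb hbba P'b) :=
    (vcc_congr hex2b (CEq.refl (vcc Pb rfl P'b)) HB rfl).trans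
      ((vcc_assoc Mb hbba (D.hcomp (D.vid b) σ') rfl (vcc Pb rfl P'b)).trans
        (vcc_congr (CEq.refl Mb) zw2 hbba hbba))
  have nat3 := C.braid_natural (D.vid b) ε
  have m4 : CEq P'b (D.vcomp S4 (D.hcomp ε (D.vid b))) :=
    (vcomp_vidr (braid_one_right C b) P'b).symm.trans (ceq_of_eq nat3)
  have zw3 : CEq (vcc Mb hbba P'b)
      (vcc (vcc Mb hbba S4) rfl (D.hcomp ε (D.vid b))) :=
    (vcc_congr (CEq.refl Mb) m4 hbba hbba).trans
      (vcc_assoc Mb hbba S4 rfl (D.hcomp ε (D.vid b))).symm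
  have mm1 : CEq (D.vcomp Mb Mb) (D.vid (D.hMul (D.hMul b b) a)) :=
    (ceq_of_eq (D.interchange (C.braid b b) (D.vid a) (C.braid b b) (D.vid a))).trans
      ((CEq.hcomp (braid_symm' C b b) (vcomp_vid' (D.vid a))).trans
        (vid_mul' (D.hMul b b) a))
  have m5 : CEq (vcc Mb hbba S4) (D.hcomp (D.vid b) σ') := by
    refine (vcc_congr (CEq.refl Mb) hex2b hbba rfl).trans ?_
    refine ((vcc_assoc Mb rfl Mb hbba _).symm).trans ?_
    exact vcc_vidl mm1 hbba (D.hcomp (D.vid b) σ')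
  have h3 : D.hMul (D.hMul b a) b = D.hMul b (D.hMul a b) := D.hMul_assoc b a b
  have zw4 : CEq (vcc (vcc Mb hbba S4) rfl (D.hcomp ε (D.vid b)))
      (vcc (D.hcomp (D.vid b) σ') h3 (D.hcomp ε (D.vid b))) :=
    vcc_congr m5 (CEq.refl _) rfl h3
  have tail : CEq (vcc S4 HB (vcc Pb rfl P'b))
      (vcc (D.hcomp (D.vid b) σ') h3 (D.hcomp ε (D.vid b))) :=
    zw1.trans (zw3.trans zw4)
  have t15 : CEq (vcc (D.hcomp (D.vcomp (D.vid b) (D.vid b)) (D.vcomp η σ)) rfl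
        (vcc S4 HB (vcc Pb rfl P'b)))
      (vcc (D.hcomp (D.vcomp (D.vid b) (D.vid b)) (D.vcomp η σ)) rfl
        (vcc (D.hcomp (D.vid b) σ') h3 (D.hcomp ε (D.vid b)))) :=
    vcc_congr (CEq.refl _) tail rfl rfl
  have t16 : CEq (vcc (D.hcomp (D.vcomp (D.vid b) (D.vid b)) (D.vcomp η σ)) rfl
        (vcc (D.hcomp (D.vid b) σ') h3 (D.hcomp ε (D.vid b))))
      (vcc (D.vcomp (D.hcomp (D.vcomp (D.vid b) (D.vid b)) (D.vcomp η σ))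
        (D.hcomp (D.vid b) σ')) h3 (D.hcomp ε (D.vid b))) :=
    (vcc_assoc _ rfl (D.hcomp (D.vid b) σ') h3 _).symm
  have inn1 : CEq (D.vcomp (D.vcomp (D.vid b) (D.vid b)) (D.vid b)) (D.vid b) :=
    (vcomp_vid' (D.vcomp (D.vid b) (D.vid b))).trans (vcomp_vid' (D.vid b))
  have inn2 : CEq (D.vcomp (D.vcomp η σ) σ') η :=
    (vcomp_assoc' η σ σ').trans (vcomp_vidr (braid_symm' C a b) η)
  have rr : CEq (D.vcomp (D.hcomp (D.vcomp (D.vid b) (D.vid b)) (D.vcomp η σ))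
      (D.hcomp (D.vid b) σ')) N1 :=
    (ceq_of_eq (D.interchange (D.vcomp (D.vid b) (D.vid b)) (D.vcomp η σ)
      (D.vid b) σ')).trans (CEq.hcomp inn1 inn2)
  have t18 : CEq (vcc (D.vcomp (D.hcomp (D.vcomp (D.vid b) (D.vid b)) (D.vcomp η σ))
        (D.hcomp (D.vid b) σ')) h3 (D.hcomp ε (D.vid b)))
      (vcc N1 h3 (D.hcomp ε (D.vid b))) :=
    vcc_congr rr (CEq.refl _) h3 h3
  have snake2' : CEq (vcc N1 h3 (D.hcomp ε (D.vid b))) (D.vid b) :=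
    ⟨D.hMul_one b, D.hOne_mul b, D.vOne_mul _, D.vOne_mul _, K.snake₂ a⟩
  exact t2.trans (t3.trans (t4.trans (t5.trans (t7.trans (t8.trans (t10.trans
    (t15.trans (t16.trans (t18.trans snake2')))))))))

end SODC
/-- Let `𝔸` be a compact closed symmetric strict monoidal
category and `D` a cornering of `𝔸`.  Then for every object `A` of `𝔸` there is
an isomorphism `A^∘ ≅ (A*)^•` in the strict monoidal category `H D` of
horizontal cells of `D`, where `A*` is the dual of `A` in `𝔸`. -/
theorem circ_iso_bullet_dual (D : SODC) (C : Cornering D) (K : CompactStructure D) :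
    ∀ a : D.H, D.HIso (C.circ a) (C.bullet (K.dual a)) := by
  intro a
  obtain ⟨f, g, h1, h2⟩ := SODC.hiso_of_snakes D C (K.dual a) a
    (D.cast rfl rfl (D.vOne_mul D.vOne) (D.vOne_mul D.vOne)
      (D.vcomp (K.eta a) (C.braid a (K.dual a))))
    (D.cast rfl rfl (D.vOne_mul D.vOne) (D.vOne_mul D.vOne)
      (D.vcomp (C.braid a (K.dual a)) (K.eps a)))
    (SODC.braided_snake_x C K a) (SODC.braided_snake_y C K a)
  exact ⟨g, f, h2, h1⟩
end
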